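/- arXiv:2412.05814 — 7 statements merged into one kernel-verified Lean document; each statement's English description precedes it below -/
import Mathlib

section
/- Let E be a sandpile graph with sink s, and let H be a nonempty saturated hereditary subset of E⁰. Then the restriction graph E_H is again a sandpile graph: s belongs to H, s is the unique sink of E_H, and for every vertex v ∈ H there is a path in E_H from v to s. -/
/-! ### Generic commutative monoid notions -/

/-- The canonical preorder on a commutative monoid: `x ≤ y` iff `y = x + z` for some `z`. -/
def cle {M : Type} [AddCommMonoid M] (x y : M) : Prop := ∃ z, y = x + z

/-- The archimedean equivalence relation on a commutative monoid. -/
def archRel {M : Type} [AddCommMonoid M] (x y : M) : Prop :=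
  (∃ m : ℕ, cle x (m • y)) ∧ (∃ n : ℕ, cle y (n • x))

/-- An element `a` is recurrent if it is accessible from every element. -/
def Recurrent {M : Type} [AddCommMonoid M] (a : M) : Prop := ∀ c, ∃ z, a = c + z

/-- An order-ideal of a commutative monoid: a submonoid `I` with `x + y ∈ I → x ∈ I ∧ y ∈ I`. -/
def IsOrderIdeal {M : Type} [AddCommMonoid M] (I : Set M) : Prop :=
  0 ∈ I ∧ (∀ x ∈ I, ∀ y ∈ I, x + y ∈ I) ∧ ∀ x y : M, x + y ∈ I → x ∈ I ∧ y ∈ I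

/-- A subsemigroup which is a group under the induced addition. -/
def IsSubgroupSet {M : Type} [AddCommMonoid M] (S : Set M) : Prop :=
  S.Nonempty ∧ (∀ x ∈ S, ∀ y ∈ S, x + y ∈ S) ∧
    ∃ e ∈ S, (∀ x ∈ S, e + x = x) ∧ ∀ x ∈ S, ∃ y ∈ S, x + y = e

/-- A maximal subgroup of a commutative monoid. -/
def IsMaximalSubgroup {M : Type} [AddCommMonoid M] (S : Set M) : Prop :=
  IsSubgroupSet S ∧ ∀ T : Set M, IsSubgroupSet T → S ⊆ T → S = T

/-- The defining setoid of the Grothendieck group of a commutative monoid. -/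
def grSetoid (M : Type) [AddCommMonoid M] : Setoid (M × M) where
  r p q := ∃ z, p.1 + q.2 + z = p.2 + q.1 + z
  iseqv := by
    constructor
    · exact fun p => ⟨0, by abel⟩
    · intro p q h
      obtain ⟨z, hz⟩ := h
      exact ⟨z, by
        calc q.1 + p.2 + z = p.2 + q.1 + z := by abel
          _ = p.1 + q.2 + z := hz.symm
          _ = q.2 + p.1 + z := by abel⟩
    · intro p q r h h'
      obtain ⟨z₁, h₁⟩ := h
      obtain ⟨z₂, h₂⟩ := h'
      refine ⟨q.1 + q.2 + z₁ + z₂, ?_⟩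
      have h : (p.1 + q.2 + z₁) + (q.1 + r.2 + z₂) = (p.2 + q.1 + z₁) + (q.2 + r.1 + z₂) := by
        rw [h₁, h₂]
      calc p.1 + r.2 + (q.1 + q.2 + z₁ + z₂)
          = (p.1 + q.2 + z₁) + (q.1 + r.2 + z₂) := by abel
        _ = (p.2 + q.1 + z₁) + (q.2 + r.1 + z₂) := h
        _ = p.2 + r.1 + (q.1 + q.2 + z₁ + z₂) := by abel

/-- The Grothendieck group of a commutative monoid, as a quotient of `M × M`. -/
def GrGroup (M : Type) [AddCommMonoid M] : Type := Quotient (grSetoid M)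

/-- Addition on the Grothendieck group. -/
def GrGroup.add {M : Type} [AddCommMonoid M] (p q : GrGroup M) : GrGroup M :=
  Quotient.map₂
    (fun p q => (p.1 + q.1, p.2 + q.2))
    (by
      intro p p' hp q q' hq
      obtain ⟨z₁, h₁⟩ := hp
      obtain ⟨z₂, h₂⟩ := hq
      refine ⟨z₁ + z₂, ?_⟩
      have h : (p.1 + p'.2 + z₁) + (q.1 + q'.2 + z₂)
          = (p.2 + p'.1 + z₁) + (q.2 + q'.1 + z₂) := by rw [h₁, h₂]
      calc p.1 + q.1 + (p'.2 + q'.2) + (z₁ + z₂)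
          = (p.1 + p'.2 + z₁) + (q.1 + q'.2 + z₂) := by abel
        _ = (p.2 + p'.1 + z₁) + (q.2 + q'.1 + z₂) := h
        _ = p.2 + q.2 + (p'.1 + q'.1) + (z₁ + z₂) := by abel)
    p q

instance {M : Type} [AddCommMonoid M] : Add (GrGroup M) := ⟨GrGroup.add⟩

/-- The defining setoid of the Grothendieck group of a (nonempty, additively closed)
subsemigroup `S` of a commutative monoid. -/
def grSubSetoid {M : Type} [AddCommMonoid M] (S : Set M) (x₀ : M) (hx₀ : x₀ ∈ S)
    (hcl : ∀ a ∈ S, ∀ b ∈ S, a + b ∈ S) : Setoid (S × S) where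
  r p q := ∃ z ∈ S, p.1.1 + q.2.1 + z = p.2.1 + q.1.1 + z
  iseqv := by
    constructor
    · exact fun p => ⟨x₀, hx₀, by abel⟩
    · intro p q h
      obtain ⟨z, hzS, hz⟩ := h
      exact ⟨z, hzS, by
        calc q.1.1 + p.2.1 + z = p.2.1 + q.1.1 + z := by abel
          _ = p.1.1 + q.2.1 + z := hz.symm
          _ = q.2.1 + p.1.1 + z := by abel⟩
    · intro p q r h h'
      obtain ⟨z₁, hz₁S, h₁⟩ := h
      obtain ⟨z₂, hz₂S, h₂⟩ := h'
      refine ⟨q.1.1 + q.2.1 + z₁ + z₂,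
        hcl _ (hcl _ (hcl _ q.1.2 _ q.2.2) _ hz₁S) _ hz₂S, ?_⟩
      have h : (p.1.1 + q.2.1 + z₁) + (q.1.1 + r.2.1 + z₂)
          = (p.2.1 + q.1.1 + z₁) + (q.2.1 + r.1.1 + z₂) := by rw [h₁, h₂]
      calc p.1.1 + r.2.1 + (q.1.1 + q.2.1 + z₁ + z₂)
          = (p.1.1 + q.2.1 + z₁) + (q.1.1 + r.2.1 + z₂) := by abel
        _ = (p.2.1 + q.1.1 + z₁) + (q.2.1 + r.1.1 + z₂) := h
        _ = p.2.1 + r.1.1 + (q.1.1 + q.2.1 + z₁ + z₂) := by abel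

/-- Addition on the Grothendieck group of a subsemigroup. -/
def grSubAdd {M : Type} [AddCommMonoid M] {S : Set M} {x₀ : M} {hx₀ : x₀ ∈ S}
    {hcl : ∀ a ∈ S, ∀ b ∈ S, a + b ∈ S}
    (p q : Quotient (grSubSetoid S x₀ hx₀ hcl)) : Quotient (grSubSetoid S x₀ hx₀ hcl) :=
  Quotient.map₂
    (fun p q => (⟨p.1.1 + q.1.1, hcl _ p.1.2 _ q.1.2⟩, ⟨p.2.1 + q.2.1, hcl _ p.2.2 _ q.2.2⟩))
    (by
      intro p p' hp q q' hq
      obtain ⟨z₁, hz₁S, h₁⟩ := hp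
      obtain ⟨z₂, hz₂S, h₂⟩ := hq
      refine ⟨z₁ + z₂, hcl _ hz₁S _ hz₂S, ?_⟩
      have h : (p.1.1 + p'.2.1 + z₁) + (q.1.1 + q'.2.1 + z₂)
          = (p.2.1 + p'.1.1 + z₁) + (q.2.1 + q'.1.1 + z₂) := by rw [h₁, h₂]
      calc p.1.1 + q.1.1 + (p'.2.1 + q'.2.1) + (z₁ + z₂)
          = (p.1.1 + p'.2.1 + z₁) + (q.1.1 + q'.2.1 + z₂) := by abel
        _ = (p.2.1 + p'.1.1 + z₁) + (q.2.1 + q'.1.1 + z₂) := h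
        _ = p.2.1 + q.2.1 + (p'.1.1 + q'.1.1) + (z₁ + z₂) := by abel)
    p q

/-! ### Finite directed graphs and sandpile monoids -/

/-- A finite directed graph. -/
structure DGraph where
  V : Type
  E : Type
  [fintV : Fintype V]
  [fintE : Fintype E]
  [decV : DecidableEq V]
  [decE : DecidableEq E]
  src : E → V
  rng : E → V

attribute [instance] DGraph.fintV DGraph.fintE DGraph.decV DGraph.decE

namespace DGraph

variable (G : DGraph)

/-- A vertex is a sink if it emits no edges. -/
def IsSink (v : G.V) : Prop := ∀ e : G.E, G.src e ≠ v

/-- One-step reachability along an edge. -/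
def Step (u v : G.V) : Prop := ∃ e : G.E, G.src e = u ∧ G.rng e = v

/-- There is a (possibly empty) path from `u` to `v`. -/
def Reaches (u v : G.V) : Prop := Relation.ReflTransGen G.Step u v

/-- A vertex lies on a cycle iff there is a nontrivial closed path based at it. -/
def OnCycle (v : G.V) : Prop := Relation.TransGen G.Step v v

/-- A sandpile graph: `s` is the unique sink and every vertex reaches `s`. -/
def IsSandpile (s : G.V) : Prop :=
  G.IsSink s ∧ (∀ v : G.V, G.IsSink v → v = s) ∧ ∀ v : G.V, G.Reaches v s

/-- The set of edges emitted by `v`. -/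
def outEdges (v : G.V) : Finset G.E := Finset.univ.filter fun e => G.src e = v

/-- A hereditary subset of vertices. -/
def Hereditary (H : Finset G.V) : Prop := ∀ e : G.E, G.src e ∈ H → G.rng e ∈ H

/-- A saturated subset of vertices. -/
def Saturated (H : Finset G.V) : Prop :=
  ∀ v : G.V, ¬ G.IsSink v → (∀ e : G.E, G.src e = v → G.rng e ∈ H) → v ∈ H

/-- The restriction graph `E_H` of a hereditary subset `H`. -/
def restrict (H : Finset G.V) (hher : G.Hereditary H) : DGraph where
  V := {v : G.V // v ∈ H}
  E := {e : G.E // G.src e ∈ H}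
  src e := ⟨G.src e.1, e.2⟩
  rng e := ⟨G.rng e.1, hher e.1 e.2⟩

/-- The defining relations of the sandpile monoid: `s = 0` and, for each non-sink
vertex `v`, `|s⁻¹(v)|·v = Σ_{e ∈ s⁻¹(v)} r(e)`. -/
def spRel (s : G.V) : Multiset G.V → Multiset G.V → Prop := fun a b =>
  (a = {s} ∧ b = 0) ∨
    ∃ v : G.V, ¬ G.IsSink v ∧ a = Multiset.replicate (G.outEdges v).card v ∧
      b = (G.outEdges v).val.map G.rng

/-- The congruence on the free commutative monoid `Multiset G.V` generated by the
sandpile relations. -/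
def spCon (s : G.V) : AddCon (Multiset G.V) := addConGen (G.spRel s)

/-- The sandpile monoid `SP(E)`. -/
abbrev SP (s : G.V) : Type := (G.spCon s).Quotient

/-- The class in `SP(E)` of an element of the free commutative monoid on the vertices. -/
def spMk (s : G.V) (a : Multiset G.V) : G.SP s := (G.spCon s).mk' a

/-- The one-step toppling/reduction relation `→₁` on the free commutative monoid. -/
def step1 (s : G.V) : Multiset G.V → Multiset G.V → Prop := fun a b =>
  (s ∈ a ∧ b = a.filter fun v => v ≠ s) ∨
    ∃ v : G.V, ¬ G.IsSink v ∧ (G.outEdges v).card ≤ a.count v ∧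
      b = (a - Multiset.replicate (G.outEdges v).card v) + (G.outEdges v).val.map G.rng

/-- The reflexive transitive closure `→` of `→₁`. -/
def Transforms (s : G.V) : Multiset G.V → Multiset G.V → Prop :=
  Relation.ReflTransGen (G.step1 s)

/-- The image in `SP(E)` of the canonical embedding of `SP(E_H)`: classes of multisets
supported in `H`. -/
def spImage (s : G.V) (H : Finset G.V) : Set (G.SP s) :=
  Set.range fun a : Multiset {v : G.V // v ∈ H} => G.spMk s (a.map Subtype.val)

open Classical in
/-- The set `S_E` of vertices from which no cycle is reachable. -/
noncomputable def sinkSet : Finset G.V :=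
  Finset.univ.filter fun v => ¬ ∃ u, G.Reaches v u ∧ G.OnCycle u

/-- Mutual reachability. -/
def MutReach (u v : G.V) : Prop := G.Reaches u v ∧ G.Reaches v u

open Classical in
/-- The strongly connected component of a vertex. -/
noncomputable def scc (v : G.V) : Finset G.V := Finset.univ.filter fun u => G.MutReach v u

/-- The set `𝓒_E` of (vertex sets of) strongly connected cyclic components. -/
def cyclicComps : Set (Finset G.V) := {C | ∃ v : G.V, G.OnCycle v ∧ C = G.scc v}

/-- The order on components: `C ≤ C'` iff there is a path from a vertex of `C` to a
vertex of `C'`. -/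
def compLe (C C' : Finset G.V) : Prop := ∃ u ∈ C, ∃ w ∈ C', G.Reaches u w

/-- A filter of the poset `𝓒_E`. -/
def IsFilter (F : Set (Finset G.V)) : Prop :=
  F ⊆ G.cyclicComps ∧ ∀ C ∈ F, ∀ C' ∈ G.cyclicComps, G.compLe C C' → C' ∈ F

open Classical in
/-- The hereditary saturated closure of a set of vertices: the intersection (hence the
smallest) of all saturated hereditary subsets containing it. -/
noncomputable def hsClosure (X : Finset G.V) : Finset G.V :=
  Finset.univ.filter fun v =>
    ∀ H : Finset G.V, G.Hereditary H → G.Saturated H → X ⊆ H → v ∈ H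

open Classical in
/-- The union of a collection of components, as a finset of vertices. -/
noncomputable def compUnion (F : Set (Finset G.V)) : Finset G.V :=
  Finset.univ.filter fun v => ∃ C ∈ F, v ∈ C

/-- The poset `𝓗^s_E = {S_E} ∪ {H_C : C ∈ 𝓒_E}`. -/
def HsE : Set (Finset G.V) :=
  insert G.sinkSet {H | ∃ C ∈ G.cyclicComps, H = G.hsClosure C}

/-- An ideal of the poset `𝓗^s_E`. -/
def IsHsIdeal (I : Set (Finset G.V)) : Prop :=
  I.Nonempty ∧ I ⊆ G.HsE ∧ ∀ x ∈ I, ∀ y ∈ G.HsE, y ⊆ x → y ∈ I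

lemma hsClosure_hereditary (X : Finset G.V) : G.Hereditary (G.hsClosure X) := by
  classical
  intro e he
  simp only [hsClosure, Finset.mem_filter, Finset.mem_univ, true_and] at he ⊢
  have he' := he
  exact fun H hher hsat hX => hher e (he' H hher hsat hX)

end DGraph
/-- The restriction of a sandpile graph to a nonempty saturated
hereditary subset is again a sandpile graph, with the same sink. -/
theorem restrict_isSandpile (G : DGraph) (s : G.V) (hG : G.IsSandpile s)
    (H : Finset G.V) (hne : H.Nonempty) (hher : G.Hereditary H) (hsat : G.Saturated H) :
    ∃ hs : s ∈ H, (G.restrict H hher).IsSandpile ⟨s, hs⟩ := by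
  classical
  -- any vertex in H reaches s in G, and H is hereditary, so s ∈ H and the path restricts
  have key : ∀ u v : G.V, G.Reaches u v → ∀ hu : u ∈ H,
      ∃ hv : v ∈ H, (G.restrict H hher).Reaches ⟨u, hu⟩ ⟨v, hv⟩ := by
    intro u v h
    induction h with
    | refl => exact fun hu => ⟨hu, Relation.ReflTransGen.refl⟩
    | tail h step ih =>
      intro hu
      obtain ⟨hb, hreach⟩ := ih hu
      obtain ⟨e, hes, her⟩ := step
      have hsrc : G.src e ∈ H := hes ▸ hb
      refine ⟨her ▸ hher e hsrc, hreach.tail ?_⟩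
      exact ⟨⟨e, hsrc⟩, Subtype.ext hes, Subtype.ext her⟩
  obtain ⟨w, hw⟩ := hne
  obtain ⟨hsH, -⟩ := key w s (hG.2.2 w) hw
  refine ⟨hsH, ?_, ?_, ?_⟩
  · intro e he
    exact hG.1 e.1 (congrArg Subtype.val he)
  · rintro ⟨v, hv⟩ hsink
    have : G.IsSink v := by
      intro e he
      exact hsink ⟨e, he ▸ hv⟩ (Subtype.ext he)
    exact Subtype.ext (hG.2.1 v this)
  · rintro ⟨v, hv⟩
    obtain ⟨hs', hr⟩ := key v s (hG.2.2 v) hv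
    exact hr
end

section
/- Let E be a sandpile graph with sink s and let a, b be nonzero elements of the free commutative monoid on E⁰. Then a and b have the same image in the sandpile monoid SP(E) if and only if there exists an element c of the free commutative monoid on E⁰ such that a → c and b → c. -/
/-! ### Auxiliary machinery for the confluence theorem -/

namespace SandpileAux

open Relation Multiset

variable {G : DGraph}

/-- Deleting all copies of the sink. -/
def pf (s : G.V) (a : Multiset G.V) : Multiset G.V := a.filter (fun u => u ≠ s)

lemma count_pf (s : G.V) (a : Multiset G.V) (u : G.V) :
    (pf s a).count u = if u = s then 0 else a.count u := by
  rw [pf, Multiset.count_filter]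
  by_cases h : u = s <;> simp [h]

lemma pf_pf (s : G.V) (a : Multiset G.V) : pf s (pf s a) = pf s a := by
  ext u; simp only [count_pf]; split_ifs <;> rfl

lemma pf_add (s : G.V) (a b : Multiset G.V) : pf s (a + b) = pf s a + pf s b := by
  ext u; simp only [count_pf, Multiset.count_add]; split_ifs <;> omega

/-- The combined topple-and-filter step on sink-free configurations. -/
def tstep (G : DGraph) (s : G.V) (x y : Multiset G.V) : Prop :=
  ∃ v : G.V, ¬ G.IsSink v ∧ (G.outEdges v).card ≤ x.count v ∧
    y = pf s ((x - Multiset.replicate (G.outEdges v).card v) + (G.outEdges v).val.map G.rng)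

lemma ne_sink_ne_s {s : G.V} (hG : G.IsSandpile s) {v : G.V} (hv : ¬ G.IsSink v) : v ≠ s :=
  fun h => hv (by rw [h]; exact hG.1)

lemma transforms_pf (s : G.V) (a : Multiset G.V) : G.Transforms s a (pf s a) := by
  by_cases h : s ∈ a
  · exact Relation.ReflTransGen.single (Or.inl ⟨h, rfl⟩)
  · have : pf s a = a := by
      rw [pf, Multiset.filter_eq_self]
      intro u hu h'; exact h (h' ▸ hu)
    rw [this]
    exact Relation.ReflTransGen.refl

lemma tstep_transforms {s : G.V} {x y : Multiset G.V} (h : tstep G s x y) :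
    G.Transforms s x y := by
  obtain ⟨v, hv, hc, rfl⟩ := h
  refine Relation.ReflTransGen.head (Or.inr ⟨v, hv, hc, rfl⟩) ?_
  exact transforms_pf s _

lemma tstepRTG_transforms {s : G.V} {x y : Multiset G.V}
    (h : Relation.ReflTransGen (tstep G s) x y) : G.Transforms s x y := by
  induction h with
  | refl => exact Relation.ReflTransGen.refl
  | tail _ h2 ih => exact ih.trans (tstep_transforms h2)

lemma tstep_pf_right {s : G.V} {x y : Multiset G.V} (h : tstep G s x y) : pf s y = y := by
  obtain ⟨v, hv, hc, rfl⟩ := h; exact pf_pf s _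

lemma tstepRTG_pf_right {s : G.V} {x y : Multiset G.V}
    (h : Relation.ReflTransGen (tstep G s) x y) (hx : pf s x = x) : pf s y = y := by
  induction h with
  | refl => exact hx
  | tail _ h2 _ => exact tstep_pf_right h2

lemma tstep_add {s : G.V} (hG : G.IsSandpile s) {x y : Multiset G.V} (z : Multiset G.V)
    (hz : pf s z = z) (h : tstep G s x y) : tstep G s (x + z) (y + z) := by
  obtain ⟨v, hv, hc, rfl⟩ := h
  refine ⟨v, hv, ?_, ?_⟩
  · rw [Multiset.count_add]; omega
  · have hvs : v ≠ s := ne_sink_ne_s hG hv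
    conv_lhs => rw [← hz]
    ext u
    simp only [count_pf, Multiset.count_add, Multiset.count_sub, Multiset.count_replicate]
    split_ifs with h1 h2 <;> simp_all <;> omega

lemma tstepRTG_add {s : G.V} (hG : G.IsSandpile s) {x y : Multiset G.V} (z : Multiset G.V)
    (hz : pf s z = z) (h : Relation.ReflTransGen (tstep G s) x y) :
    Relation.ReflTransGen (tstep G s) (x + z) (y + z) := by
  induction h with
  | refl => exact Relation.ReflTransGen.refl
  | tail _ h2 ih => exact ih.tail (tstep_add hG z hz h2)

lemma tstep_diamond {s : G.V} (hG : G.IsSandpile s) {x y z : Multiset G.V}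
    (hy : tstep G s x y) (hz : tstep G s x z) :
    y = z ∨ ∃ d, tstep G s y d ∧ tstep G s z d := by
  obtain ⟨v, hv, hcv, rfl⟩ := hy
  obtain ⟨w, hw, hcw, rfl⟩ := hz
  by_cases hvw : v = w
  · subst hvw; exact Or.inl rfl
  · right
    have hvs : v ≠ s := ne_sink_ne_s hG hv
    have hws : w ≠ s := ne_sink_ne_s hG hw
    refine ⟨pf s ((pf s ((x - Multiset.replicate (G.outEdges v).card v) +
        (G.outEdges v).val.map G.rng) - Multiset.replicate (G.outEdges w).card w) +
        (G.outEdges w).val.map G.rng),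
      ⟨w, hw, ?_, rfl⟩, ⟨v, hv, ?_, ?_⟩⟩
    · simp only [count_pf, Multiset.count_add, Multiset.count_sub, Multiset.count_replicate]
      split_ifs <;> subst_vars <;> first | omega | simp_all
    · simp only [count_pf, Multiset.count_add, Multiset.count_sub, Multiset.count_replicate]
      split_ifs <;> subst_vars <;> first | omega | simp_all
    · ext u
      simp only [count_pf, Multiset.count_add, Multiset.count_sub, Multiset.count_replicate]
      split_ifs <;> subst_vars <;> first | omega | simp_all

lemma join_equivalence {s : G.V} (hG : G.IsSandpile s) :
    Equivalence (Relation.Join (Relation.ReflTransGen (tstep G s))) := by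
  apply Relation.equivalence_join_reflTransGen
  intro a b c hab hac
  rcases tstep_diamond hG hab hac with h | ⟨d, hd1, hd2⟩
  · exact ⟨c, h ▸ (Relation.ReflGen.refl : Relation.ReflGen (SandpileAux.tstep G s) b b),
      Relation.ReflTransGen.refl⟩
  · exact ⟨d, Relation.ReflGen.single hd1, Relation.ReflTransGen.single hd2⟩

/-- Projection of a `step1` to the sink-free world. -/
lemma step1_proj {s : G.V} (hG : G.IsSandpile s) {a b : Multiset G.V}
    (h : G.step1 s a b) : Relation.ReflTransGen (tstep G s) (pf s a) (pf s b) := by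
  rcases h with ⟨hs, rfl⟩ | ⟨v, hv, hc, rfl⟩
  · rw [show (Multiset.filter (fun u => u ≠ s) a) = pf s a from rfl, pf_pf]
  · have hvs : v ≠ s := ne_sink_ne_s hG hv
    apply Relation.ReflTransGen.single
    refine ⟨v, hv, ?_, ?_⟩
    · rw [count_pf]; simp [hvs]; omega
    · ext u
      simp only [count_pf, Multiset.count_add, Multiset.count_sub, Multiset.count_replicate]
      split_ifs <;> simp_all <;> omega

lemma transforms_proj {s : G.V} (hG : G.IsSandpile s) {a b : Multiset G.V}
    (h : G.Transforms s a b) : Relation.ReflTransGen (tstep G s) (pf s a) (pf s b) := by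
  induction h with
  | refl => exact Relation.ReflTransGen.refl
  | tail _ h2 ih => exact ih.trans (step1_proj hG h2)

/-- The joinability relation, as an additive congruence. -/
def Jcon (G : DGraph) (s : G.V) (hG : G.IsSandpile s) : AddCon (Multiset G.V) where
  r a b := Relation.Join (Relation.ReflTransGen (tstep G s)) (pf s a) (pf s b)
  iseqv := by
    constructor
    · intro a; exact (join_equivalence hG).refl _
    · intro a b h; exact (join_equivalence hG).symm h
    · intro a b c h1 h2; exact (join_equivalence hG).trans h1 h2
  add' := by
    intro a b c d ⟨u, hau, hbu⟩ ⟨w, hcw, hdw⟩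
    have hu : pf s u = u := tstepRTG_pf_right hau (pf_pf s a)
    have hw : pf s w = w := tstepRTG_pf_right hcw (pf_pf s c)
    refine ⟨u + w, ?_, ?_⟩
    · rw [pf_add]
      refine (tstepRTG_add hG _ (pf_pf s c) hau).trans ?_
      rw [show u + pf s c = pf s c + u from add_comm _ _, show u + w = w + u from add_comm _ _]
      exact tstepRTG_add hG _ hu hcw
    · rw [pf_add]
      refine (tstepRTG_add hG _ (pf_pf s d) hbu).trans ?_
      rw [show u + pf s d = pf s d + u from add_comm _ _, show u + w = w + u from add_comm _ _]
      exact tstepRTG_add hG _ hu hdw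

lemma spRel_le_Jcon {s : G.V} (hG : G.IsSandpile s) {a b : Multiset G.V}
    (h : G.spRel s a b) : Jcon G s hG a b := by
  rcases h with ⟨rfl, rfl⟩ | ⟨v, hv, rfl, rfl⟩
  · have : pf s ({s} : Multiset G.V) = pf s 0 := by
      ext u; simp only [count_pf]
      split_ifs with h1 <;> simp [Multiset.count_singleton, h1]
    show Relation.Join (Relation.ReflTransGen (tstep G s)) (pf s {s}) (pf s 0)
    rw [this]
    exact (join_equivalence hG).refl _
  · have hvs : v ≠ s := ne_sink_ne_s hG hv
    refine ⟨pf s ((G.outEdges v).val.map G.rng), Relation.ReflTransGen.single ?_, ?_⟩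
    · refine ⟨v, hv, ?_, ?_⟩
      · rw [count_pf]; simp [hvs, Multiset.count_replicate]
      · ext u
        simp only [count_pf, Multiset.count_add, Multiset.count_sub, Multiset.count_replicate]
        split_ifs <;> simp_all <;> omega
    · exact Relation.ReflTransGen.refl

/-- Each `step1` preserves the class in the sandpile monoid. -/
lemma step1_spCon {s : G.V} {a b : Multiset G.V} (h : G.step1 s a b) :
    G.spCon s a b := by
  rcases h with ⟨hs, rfl⟩ | ⟨v, hv, hc, rfl⟩
  · have key : ∀ k : ℕ, G.spCon s (Multiset.replicate k s) 0 := by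
      intro k
      induction k with
      | zero => exact (G.spCon s).refl 0
      | succ n ih =>
        have h1 : G.spCon s ({s} : Multiset G.V) 0 :=
          AddConGen.Rel.of _ _ (Or.inl ⟨rfl, rfl⟩)
        have := (G.spCon s).add ih h1
        rw [add_zero] at this
        have hrep : Multiset.replicate (n + 1) s = Multiset.replicate n s + {s} := by
          rw [Multiset.replicate_succ, add_comm, Multiset.singleton_add]
        rw [hrep]; exact this
    have hsplit : a = Multiset.filter (fun u => u ≠ s) a + Multiset.replicate (a.count s) s := by
      ext u
      rw [Multiset.count_add, Multiset.count_filter, Multiset.count_replicate]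
      split_ifs <;> simp_all
    have := (G.spCon s).add ((G.spCon s).refl (Multiset.filter (fun u => u ≠ s) a))
      (key (a.count s))
    rw [add_zero] at this
    exact (G.spCon s).trans (hsplit ▸ (G.spCon s).refl a) this
  · have hsplit : a = (a - Multiset.replicate (G.outEdges v).card v) +
        Multiset.replicate (G.outEdges v).card v := by
      ext u
      simp only [Multiset.count_add, Multiset.count_sub, Multiset.count_replicate]
      split_ifs <;> simp_all <;> omega
    have h1 : G.spCon s (Multiset.replicate (G.outEdges v).card v)
        ((G.outEdges v).val.map G.rng) :=
      AddConGen.Rel.of _ _ (Or.inr ⟨v, hv, rfl, rfl⟩)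
    have := (G.spCon s).add
      ((G.spCon s).refl (a - Multiset.replicate (G.outEdges v).card v)) h1
    exact (G.spCon s).trans (hsplit ▸ (G.spCon s).refl a) this

lemma transforms_spCon {s : G.V} {a b : Multiset G.V} (h : G.Transforms s a b) :
    G.spCon s a b := by
  induction h with
  | refl => exact (G.spCon s).refl a
  | tail _ h2 ih => exact (G.spCon s).trans ih (step1_spCon h2)

end SandpileAux

/-- Confluence property: two nonzero elements of the free commutative
monoid on the vertices represent the same element of `SP(E)` iff they transform to a
common element. -/
theorem confluence (G : DGraph) (s : G.V) (hG : G.IsSandpile s)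
    (a b : Multiset G.V) (ha : a ≠ 0) (hb : b ≠ 0) :
    G.spMk s a = G.spMk s b ↔
      ∃ c : Multiset G.V, G.Transforms s a c ∧ G.Transforms s b c := by
  classical
  constructor
  · intro h
    have hcon : G.spCon s a b := by
      have := (AddCon.eq (G.spCon s)).mp h
      exact this
    have hJ : SandpileAux.Jcon G s hG a b := by
      have hle : G.spCon s ≤ SandpileAux.Jcon G s hG :=
        AddCon.addConGen_le.mpr (fun x y hxy => SandpileAux.spRel_le_Jcon hG hxy)
      exact hle hcon
    obtain ⟨u, hau, hbu⟩ := hJ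
    refine ⟨u, ?_, ?_⟩
    · exact (SandpileAux.transforms_pf s a).trans (SandpileAux.tstepRTG_transforms hau)
    · exact (SandpileAux.transforms_pf s b).trans (SandpileAux.tstepRTG_transforms hbu)
  · rintro ⟨c, hac, hbc⟩
    have h1 : G.spCon s a c := SandpileAux.transforms_spCon hac
    have h2 : G.spCon s b c := SandpileAux.transforms_spCon hbc
    have : G.spCon s a b := (G.spCon s).trans h1 ((G.spCon s).symm h2)
    exact (AddCon.eq (G.spCon s)).mpr this
end

section
/- Let E be a sandpile graph and H a nonempty saturated hereditary subset of E⁰. Then the map sending the class in SP(E_H) of each element of the free commutative monoid on H to its class in SP(E) is a well-defined injective monoid homomorphism ψ_H : SP(E_H) → SP(E); in particular SP(E_H) embeds as a submonoid of SP(E). -/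
namespace SPAux
open DGraph Relation Multiset

variable (G : DGraph) (s : G.V)

/-- One-step rewriting: remove a single sink chip, or topple a non-sink vertex. -/
def rstep (a b : Multiset G.V) : Prop :=
  (s ∈ a ∧ b = a.erase s) ∨
    ∃ v : G.V, ¬ G.IsSink v ∧ (G.outEdges v).card ≤ a.count v ∧
      b = (a - Multiset.replicate (G.outEdges v).card v) + (G.outEdges v).val.map G.rng

variable {G s}

lemma rstep_add {a b : Multiset G.V} (c : Multiset G.V) (h : rstep G s a b) :
    rstep G s (a + c) (b + c) := by
  rcases h with ⟨hs, rfl⟩ | ⟨v, hv, hc, rfl⟩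
  · refine Or.inl ⟨Multiset.mem_add.2 (Or.inl hs), ?_⟩
    ext u
    rcases eq_or_ne u s with rfl | hu
    · rw [Multiset.count_erase_self, Multiset.count_add, Multiset.count_add,
        Multiset.count_erase_self]
      have := Multiset.count_pos.2 hs
      omega
    · rw [Multiset.count_erase_of_ne hu, Multiset.count_add, Multiset.count_add,
        Multiset.count_erase_of_ne hu]
  · refine Or.inr ⟨v, hv, le_trans hc (by rw [Multiset.count_add]; omega), ?_⟩
    ext u
    have hc' : (G.outEdges v).card ≤ a.count v := hc
    simp only [Multiset.count_add, Multiset.count_sub, Multiset.count_replicate]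
    split_ifs with h
    · subst h; omega
    · omega

/-- The additive congruence generated by `rstep` as an equivalence. -/
def eqvCon (G : DGraph) (s : G.V) : AddCon (Multiset G.V) where
  r := EqvGen (rstep G s)
  iseqv := Relation.EqvGen.is_equivalence _
  add' := by
    have key : ∀ {a b : Multiset G.V} (c : Multiset G.V),
        EqvGen (rstep G s) a b → EqvGen (rstep G s) (a + c) (b + c) := by
      intro a b c h
      induction h with
      | rel x y h => exact EqvGen.rel _ _ (rstep_add c h)
      | refl x => exact EqvGen.refl _
      | symm x y _ ih => exact (ih).symm _ _
      | trans x y z _ _ ih₁ ih₂ => exact ih₁.trans _ _ _ ih₂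
    intro w x y z h₁ h₂
    have h₁' := key y h₁
    have h₂' := key x h₂
    rw [add_comm y x, add_comm z x] at h₂'
    exact h₁'.trans _ _ _ h₂'

lemma spCon_le_eqvCon : G.spCon s ≤ eqvCon G s := by
  refine AddCon.addConGen_le.2 ?_
  rintro a b (⟨rfl, rfl⟩ | ⟨v, hv, rfl, rfl⟩)
  · exact EqvGen.rel _ _ (Or.inl ⟨Multiset.mem_singleton_self s, by simp⟩)
  · refine EqvGen.rel _ _ (Or.inr ⟨v, hv, ?_, ?_⟩)
    · simp [Multiset.count_replicate]
    · simp

end SPAux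
namespace SPAux
open DGraph Relation Multiset

variable {G : DGraph} {s : G.V}

lemma nonsink_card_pos {v : G.V} (hv : ¬ G.IsSink v) : 0 < (G.outEdges v).card := by
  simp only [DGraph.IsSink, not_forall, not_not] at hv
  obtain ⟨e, he⟩ := hv
  exact Finset.card_pos.2 ⟨e, by simp [DGraph.outEdges, he]⟩

/-- Interaction of an erase step with a toppling step. -/
lemma erase_topple {a : Multiset G.V} (hsink : G.IsSink s) (hs : s ∈ a)
    {v : G.V} (hv : ¬ G.IsSink v) (hc : (G.outEdges v).card ≤ a.count v) :
    let c := (a - Multiset.replicate (G.outEdges v).card v) + (G.outEdges v).val.map G.rng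
    rstep G s (a.erase s) (c.erase s) ∧ rstep G s c (c.erase s) := by
  intro c
  have hvs : v ≠ s := fun h => hv (h ▸ hsink)
  have h1 : ∀ (x : Multiset G.V), s ∈ x →
      ∀ u, (x.erase s).count u = x.count u - (if u = s then 1 else 0) := by
    intro x hx u
    rcases eq_or_ne u s with rfl | hu
    · rw [Multiset.count_erase_self, if_pos rfl]
    · rw [Multiset.count_erase_of_ne hu, if_neg hu]; omega
  have hcount : ∀ u, c.count u =
      (a.count u - (if v = u then (G.outEdges v).card else 0))
        + ((G.outEdges v).val.map G.rng).count u := by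
    intro u
    simp [c, Multiset.count_add, Multiset.count_sub, Multiset.count_replicate]
  have hsc : s ∈ c := by
    rw [← Multiset.count_pos, hcount, if_neg hvs]
    have := Multiset.count_pos.2 hs
    omega
  constructor
  · refine Or.inr ⟨v, hv, ?_, ?_⟩
    · rwa [Multiset.count_erase_of_ne hvs]
    · ext u
      have hs' := Multiset.count_pos.2 hs
      simp only [Multiset.count_add, Multiset.count_sub, Multiset.count_replicate,
        h1 _ hsc, h1 _ hs, hcount]
      rcases eq_or_ne v u with rfl | hvu
      · rw [if_pos rfl, if_neg hvs]
        omega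
      · rw [if_neg hvu]
        rcases eq_or_ne u s with rfl | hus
        · rw [if_pos rfl]
          omega
        · rw [if_neg hus]
          omega
  · exact Or.inl ⟨hsc, rfl⟩

/-- Strong confluence (diamond up to `ReflGen`) of `rstep`. -/
lemma rstep_diamond (hsink : G.IsSink s) {a b c : Multiset G.V}
    (hb : rstep G s a b) (hc : rstep G s a c) :
    ∃ d, ReflGen (rstep G s) b d ∧ ReflGen (rstep G s) c d := by
  rcases hb with ⟨hsb, rfl⟩ | ⟨v, hv, hvc, rfl⟩
  · rcases hc with ⟨hsc, rfl⟩ | ⟨w, hw, hwc, rfl⟩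
    · exact ⟨a.erase s, ReflGen.refl, ReflGen.refl⟩
    · obtain ⟨h1, h2⟩ := erase_topple hsink hsb hw hwc
      exact ⟨_, ReflGen.single h1, ReflGen.single h2⟩
  · rcases hc with ⟨hsc, rfl⟩ | ⟨w, hw, hwc, rfl⟩
    · obtain ⟨h1, h2⟩ := erase_topple hsink hsc hv hvc
      exact ⟨_, ReflGen.single h2, ReflGen.single h1⟩
    · rcases eq_or_ne v w with rfl | hvw
      · exact ⟨_, ReflGen.refl, ReflGen.refl⟩
      · have hbw : (G.outEdges w).card ≤
            ((a - Multiset.replicate (G.outEdges v).card v)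
              + (G.outEdges v).val.map G.rng).count w := by
          simp only [Multiset.count_add, Multiset.count_sub, Multiset.count_replicate,
            if_neg hvw]
          omega
        have hcv : (G.outEdges v).card ≤
            ((a - Multiset.replicate (G.outEdges w).card w)
              + (G.outEdges w).val.map G.rng).count v := by
          simp only [Multiset.count_add, Multiset.count_sub, Multiset.count_replicate,
            if_neg (Ne.symm hvw)]
          omega
        refine ⟨_, ReflGen.single (Or.inr ⟨w, hw, hbw, rfl⟩),
          ReflGen.single (Or.inr ⟨v, hv, hcv, ?_⟩)⟩
        ext u
        simp only [Multiset.count_add, Multiset.count_sub, Multiset.count_replicate]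
        rcases eq_or_ne v u with rfl | h1
        · rw [if_pos rfl, if_neg (Ne.symm hvw)]
          omega
        · rw [if_neg h1]
          rcases eq_or_ne w u with rfl | h2
          · rw [if_pos rfl]
            omega
          · rw [if_neg h2]
            omega

/-- Church–Rosser for `rstep`. -/
lemma rstep_cr (hsink : G.IsSink s) {a b : Multiset G.V}
    (h : EqvGen (rstep G s) a b) :
    ∃ d, ReflTransGen (rstep G s) a d ∧ ReflTransGen (rstep G s) b d := by
  have hd : ∀ x y z : Multiset G.V, rstep G s x y → rstep G s x z →
      ∃ d, ReflGen (rstep G s) y d ∧ ReflTransGen (rstep G s) z d := by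
    intro x y z hy hz
    obtain ⟨d, h1, h2⟩ := rstep_diamond hsink hy hz
    exact ⟨d, h1, h2.to_reflTransGen⟩
  induction h with
  | rel x y h => exact ⟨y, ReflTransGen.single h, ReflTransGen.refl⟩
  | refl x => exact ⟨x, ReflTransGen.refl, ReflTransGen.refl⟩
  | symm x y _ ih => exact Relation.symmetric_join.symm _ _ ih
  | trans x y z _ _ ih1 ih2 =>
      exact (Relation.equivalence_join_reflTransGen hd).trans ih1 ih2

end SPAux
namespace SPAux
open DGraph Relation Multiset

variable {G : DGraph} {s : G.V} {H : Finset G.V} {hher : G.Hereditary H}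

lemma mem_outEdges' (G' : DGraph) (v : G'.V) (e : G'.E) :
    e ∈ G'.outEdges v ↔ G'.src e = v := by
  simp [DGraph.outEdges]

lemma outEdges_map (v : {x : G.V // x ∈ H}) :
    ((G.restrict H hher).outEdges v).map ⟨Subtype.val, Subtype.val_injective⟩
      = G.outEdges v.1 := by
  ext e
  refine Finset.mem_map.trans ⟨?_, ?_⟩
  · rintro ⟨e', he', rfl⟩
    exact (mem_outEdges' _ _ _).2 (congrArg Subtype.val ((mem_outEdges' _ _ _).1 he'))
  · intro he
    exact ⟨⟨e, ((mem_outEdges' _ _ _).1 he) ▸ v.2⟩,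
      (mem_outEdges' _ _ _).2 (Subtype.ext ((mem_outEdges' _ _ _).1 he)), rfl⟩

lemma card_outEdges (v : {x : G.V // x ∈ H}) :
    ((G.restrict H hher).outEdges v).card = (G.outEdges v.1).card := by
  rw [← outEdges_map (hher := hher) v]
  exact (Finset.card_map _).symm

lemma ranges_map (v : {x : G.V // x ∈ H}) :
    ((((G.restrict H hher).outEdges v).val.map (G.restrict H hher).rng).map Subtype.val)
      = (G.outEdges v.1).val.map G.rng := by
  have h := congrArg Finset.val (outEdges_map (hher := hher) v)
  replace h := (Finset.map_val _ _).symm.trans h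
  rw [← h]
  exact (Multiset.map_map _ _ _).trans (Multiset.map_map G.rng _ _).symm

lemma nonsink_iff (v : {x : G.V // x ∈ H}) :
    ¬ (G.restrict H hher).IsSink v ↔ ¬ G.IsSink v.1 := by
  simp only [DGraph.IsSink, not_forall, not_not]
  constructor
  · rintro ⟨e, he⟩
    exact ⟨e.1, congrArg Subtype.val he⟩
  · rintro ⟨e, he⟩
    exact ⟨⟨e, he ▸ v.2⟩, Subtype.ext he⟩

variable (hher)

/-- Lift a single rewriting step on an `H`-supported multiset. -/
lemma lift_step {hs : s ∈ H} {a : Multiset {x : G.V // x ∈ H}} {d : Multiset G.V}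
    (h : rstep G s (a.map Subtype.val) d) :
    ∃ a' : Multiset {x : G.V // x ∈ H}, a'.map Subtype.val = d ∧
      ((G.restrict H hher).spCon ⟨s, hs⟩) a a' := by
  set c : AddCon (Multiset {x : G.V // x ∈ H}) := (G.restrict H hher).spCon ⟨s, hs⟩ with hcdef
  rcases h with ⟨hsd, rfl⟩ | ⟨v, hv, hvc, rfl⟩
  · obtain ⟨x, hx, hxs⟩ := Multiset.mem_map.1 hsd
    have hxe : x = ⟨s, hs⟩ := Subtype.ext hxs
    subst hxe
    refine ⟨a.erase ⟨s, hs⟩, ?_, ?_⟩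
    · rw [Multiset.map_erase _ Subtype.val_injective]
    · have h0 : c {(⟨s, hs⟩ : {x : G.V // x ∈ H})} 0 :=
        AddConGen.Rel.of _ _ (Or.inl ⟨rfl, rfl⟩)
      have h2 : c ({⟨s, hs⟩} + a.erase ⟨s, hs⟩) (0 + a.erase ⟨s, hs⟩) :=
        c.add h0 (c.refl _)
      rw [Multiset.singleton_add, Multiset.cons_erase hx, zero_add] at h2
      exact h2
  · have hvm : v ∈ a.map Subtype.val := by
      rw [← Multiset.count_pos]
      have := nonsink_card_pos hv
      omega
    obtain ⟨x, hx, hxv⟩ := Multiset.mem_map.1 hvm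
    have hvH : v ∈ H := hxv ▸ x.2
    set v' : {x : G.V // x ∈ H} := ⟨v, hvH⟩ with hv'
    have hcnt : a.count v' = (a.map Subtype.val).count v :=
      (Multiset.count_map_eq_count' _ a Subtype.val_injective v').symm
    have hns : ¬ (G.restrict H hher).IsSink v' := (nonsink_iff v').2 hv
    have hcard : ((G.restrict H hher).outEdges v').card = (G.outEdges v).card :=
      card_outEdges v'
    have hle : Multiset.replicate (G.outEdges v).card v' ≤ a := by
      rw [Multiset.le_iff_count]
      intro u
      rw [Multiset.count_replicate]
      split_ifs with h
      · subst h; omega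
      · omega
    set R' : Multiset {x : G.V // x ∈ H} :=
      ((G.restrict H hher).outEdges v').val.map (G.restrict H hher).rng with hR'
    have hR'map : R'.map Subtype.val = (G.outEdges v).val.map G.rng := ranges_map v'
    refine ⟨(a - Multiset.replicate (G.outEdges v).card v') + R', ?_, ?_⟩
    · rw [Multiset.map_add, hR'map]
      congr 1
      have hsplit : a = (a - Multiset.replicate (G.outEdges v).card v')
          + Multiset.replicate (G.outEdges v).card v' := (tsub_add_cancel_of_le hle).symm
      have : a.map Subtype.val
          = ((a - Multiset.replicate (G.outEdges v).card v').map Subtype.val)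
            + Multiset.replicate (G.outEdges v).card v := by
        conv_lhs => rw [hsplit]
        rw [Multiset.map_add, Multiset.map_replicate]
      rw [this, add_tsub_cancel_right]
    · have hbase : c (Multiset.replicate ((G.restrict H hher).outEdges v').card v') R' :=
        AddConGen.Rel.of _ _ (Or.inr ⟨v', hns, rfl, rfl⟩)
      rw [hcard] at hbase
      have h2 : c ((a - Multiset.replicate (G.outEdges v).card v')
            + Multiset.replicate (G.outEdges v).card v')
          ((a - Multiset.replicate (G.outEdges v).card v') + R') :=
        c.add (c.refl _) hbase
      rwa [tsub_add_cancel_of_le hle] at h2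

/-- Lift a rewriting sequence on an `H`-supported multiset. -/
lemma lift_steps {hs : s ∈ H} {a : Multiset {x : G.V // x ∈ H}} {d : Multiset G.V}
    (h : ReflTransGen (rstep G s) (a.map Subtype.val) d) :
    ∃ a' : Multiset {x : G.V // x ∈ H}, a'.map Subtype.val = d ∧
      ((G.restrict H hher).spCon ⟨s, hs⟩) a a' := by
  induction h with
  | refl => exact ⟨a, rfl, ((G.restrict H hher).spCon ⟨s, hs⟩).refl a⟩
  | tail _ hstep ih =>
      obtain ⟨a', ha', hcon⟩ := ih
      obtain ⟨a'', ha'', hcon'⟩ := lift_step hher (hs := hs) (a := a') (ha' ▸ hstep)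
      exact ⟨a'', ha'', hcon.trans hcon'⟩

end SPAux
/-- The canonical map `SP(E_H) → SP(E)` is a well-defined injective
monoid homomorphism. -/
theorem sp_restrict_embedding (G : DGraph) (s : G.V) (hG : G.IsSandpile s)
    (H : Finset G.V) (hne : H.Nonempty) (hher : G.Hereditary H) (hsat : G.Saturated H)
    (hs : s ∈ H) :
    ∃ ψ : (G.restrict H hher).SP ⟨s, hs⟩ →+ G.SP s,
      (∀ a : Multiset {v : G.V // v ∈ H},
        ψ ((G.restrict H hher).spMk ⟨s, hs⟩ a) = G.spMk s (a.map Subtype.val)) ∧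
      Function.Injective ψ := by
  classical
  set c : AddCon (Multiset {x : G.V // x ∈ H}) := (G.restrict H hher).spCon ⟨s, hs⟩ with hc
  set f : Multiset {x : G.V // x ∈ H} →+ G.SP s :=
    { toFun := fun a => G.spMk s (a.map Subtype.val)
      map_zero' := by simp only [Multiset.map_zero, DGraph.spMk, map_zero]
      map_add' := by intro a b; simp only [Multiset.map_add, DGraph.spMk, map_add] } with hf
  have hfa : ∀ a : Multiset {x : G.V // x ∈ H}, f a = G.spMk s (a.map Subtype.val) :=
    fun a => rfl
  have hGeq : ∀ x y : Multiset G.V, (G.spCon s) x y → G.spMk s x = G.spMk s y := by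
    intro x y h
    show ((G.spCon s).mk') x = ((G.spCon s).mk') y
    rw [AddCon.coe_mk']
    exact (AddCon.eq _).2 h
  have hfle : c ≤ AddCon.ker f := by
    refine AddCon.addConGen_le.2 ?_
    rintro a b (⟨rfl, rfl⟩ | ⟨v, hv, rfl, rfl⟩)
    · apply (AddCon.ker_rel f).2
      show G.spMk s (Multiset.map Subtype.val {⟨s, hs⟩})
        = G.spMk s (Multiset.map Subtype.val 0)
      simp only [Multiset.map_singleton, Multiset.map_zero]
      exact hGeq _ _ (AddConGen.Rel.of _ _ (Or.inl ⟨rfl, rfl⟩))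
    · apply (AddCon.ker_rel f).2
      show G.spMk s (Multiset.map Subtype.val
          (Multiset.replicate ((G.restrict H hher).outEdges v).card v))
        = G.spMk s (Multiset.map Subtype.val
          (Multiset.map (G.restrict H hher).rng ((G.restrict H hher).outEdges v).val))
      refine (congrArg (G.spMk s) ?_).trans ((hGeq _ _ (AddConGen.Rel.of _ _
          (Or.inr ⟨v.1, (SPAux.nonsink_iff v).1 hv, rfl, rfl⟩))).trans (congrArg (G.spMk s) ?_))
      · exact (Multiset.map_replicate _ _ _).trans
          (congrArg (Multiset.replicate · v.1) (SPAux.card_outEdges v))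
      · exact (SPAux.ranges_map v).symm
  refine ⟨c.lift f hfle, ?_, ?_⟩
  · intro a
    show c.lift f hfle (c.mk' a) = _
    rw [AddCon.coe_mk', AddCon.lift_coe]
    exact hfa a
  · intro x y hxy
    obtain ⟨a, rfl⟩ := AddCon.mk'_surjective x
    obtain ⟨b, rfl⟩ := AddCon.mk'_surjective y
    change f a = f b at hxy
    replace hxy := (hfa a).symm.trans (hxy.trans (hfa b))
    have h1 : (G.spCon s) (a.map Subtype.val) (b.map Subtype.val) := by
      rw [← AddCon.eq (c := G.spCon s)]
      exact hxy
    have h2 : Relation.EqvGen (SPAux.rstep G s) (a.map Subtype.val) (b.map Subtype.val) :=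
      SPAux.spCon_le_eqvCon h1
    obtain ⟨d, hda, hdb⟩ := SPAux.rstep_cr hG.1 h2
    obtain ⟨a', ha', hcona⟩ := SPAux.lift_steps hher (hs := hs) hda
    obtain ⟨b', hb', hconb⟩ := SPAux.lift_steps hher (hs := hs) hdb
    have hab : a' = b' := Multiset.map_injective Subtype.val_injective (ha'.trans hb'.symm)
    show c.mk' a = c.mk' b
    rw [AddCon.coe_mk']
    exact (AddCon.eq c).2 (hcona.trans (hab ▸ hconb.symm))
end

section
/- Let E be a sandpile graph and let H ⊆ H' be nonempty saturated hereditary subsets of E⁰. Then the map sending the class in SP(E_H) of each element of the free commutative monoid on H to its class in SP(E_{H'}) is a well-defined injective monoid homomorphism SP(E_H) → SP(E_{H'}). -/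
namespace SPEmbedAux
open DGraph

variable (G : DGraph)

lemma restrict_outEdges_map (H : Finset G.V) (hher : G.Hereditary H)
    (x : (G.restrict H hher).V) :
    ((G.restrict H hher).outEdges x).map ⟨Subtype.val, Subtype.val_injective⟩
      = G.outEdges x.1 := by
  ext e
  erw [Finset.mem_map]
  simp only [Finset.mem_map, DGraph.outEdges, Finset.mem_filter, Finset.mem_univ, true_and,
    Function.Embedding.coeFn_mk]
  constructor
  · rintro ⟨e', he', rfl⟩
    exact congrArg Subtype.val ((@Finset.mem_filter _ _ (fun e => (G.restrict H hher).decV _ x) _ _).1 he').2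
  · intro he
    exact ⟨⟨e, he ▸ x.2⟩, (@Finset.mem_filter _ _ (fun e => (G.restrict H hher).decV _ x) _ _).2 ⟨Finset.mem_univ _, Subtype.ext he⟩, rfl⟩

lemma restrict_outEdges_card (H : Finset G.V) (hher : G.Hereditary H)
    (x : (G.restrict H hher).V) :
    ((G.restrict H hher).outEdges x).card = (G.outEdges x.1).card := by
  erw [← restrict_outEdges_map G H hher x, Finset.card_map]; rfl

lemma restrict_ranges (H : Finset G.V) (hher : G.Hereditary H)
    (x : (G.restrict H hher).V) :
    Multiset.map Subtype.val
        (((G.restrict H hher).outEdges x).val.map (G.restrict H hher).rng)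
      = (G.outEdges x.1).val.map G.rng := by
  erw [Multiset.map_map]
  have h1 : (Subtype.val ∘ (G.restrict H hher).rng)
      = (G.rng ∘ (Subtype.val : {e : G.E // G.src e ∈ H} → G.E)) := rfl
  erw [h1, ← Multiset.map_map]
  congr 1
  have := congrArg Finset.val (restrict_outEdges_map G H hher x)
  exact this

lemma restrict_isSink_iff (H : Finset G.V) (hher : G.Hereditary H)
    (x : (G.restrict H hher).V) :
    (G.restrict H hher).IsSink x ↔ G.IsSink x.1 := by
  constructor
  · intro h e he
    exact h ⟨e, he ▸ x.2⟩ (Subtype.ext he)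
  · intro h e he
    exact h e.1 (congrArg Subtype.val he)

section Main

variable (s : G.V) (H H' : Finset G.V)
  (hher : G.Hereditary H) (hsat : G.Saturated H)
  (hher' : G.Hereditary H') (hsub : H ⊆ H') (hs : s ∈ H)

/-- The vertex inclusion. -/
def j (v : (G.restrict H hher).V) : (G.restrict H' hher').V := ⟨v.1, hsub v.2⟩

lemma j_injective : Function.Injective (j G H H' hher hher' hsub) := by
  intro a b h
  have h2 : a.1 = b.1 := congrArg (Subtype.val : (G.restrict H' hher').V → G.V) h
  exact Subtype.ext h2

lemma map_val_map_j (a : Multiset (G.restrict H hher).V) :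
    Multiset.map Subtype.val (a.map (j G H H' hher hher' hsub))
      = Multiset.map Subtype.val a := by
  erw [Multiset.map_map]; rfl

/-- translation of relations, forward. -/
lemma rel_fwd {a b : Multiset (G.restrict H hher).V}
    (h : (G.restrict H hher).spRel ⟨s, hs⟩ a b) :
    (G.restrict H' hher').spRel ⟨s, hsub hs⟩
      (a.map (j G H H' hher hher' hsub)) (b.map (j G H H' hher hher' hsub)) := by
  rcases h with ⟨rfl, rfl⟩ | ⟨v, hns, rfl, rfl⟩
  · left
    constructor
    · erw [Multiset.map_singleton]; rfl
    · rfl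
  · right
    refine ⟨j G H H' hher hher' hsub v, ?_, ?_, ?_⟩
    · rw [restrict_isSink_iff] at hns ⊢
      exact hns
    · rw [Multiset.map_replicate]
      congr 1
      rw [restrict_outEdges_card, restrict_outEdges_card]
      rfl
    · apply Multiset.map_injective (Subtype.val_injective)
      erw [map_val_map_j, restrict_ranges, restrict_ranges]
      rfl

lemma exists_pre (x : Multiset (G.restrict H' hher').V)
    (hx : ∀ v ∈ x, v.1 ∈ H) :
    ∃ a : Multiset (G.restrict H hher).V, a.map (j G H H' hher hher' hsub) = x := by
  induction x using Multiset.induction with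
  | empty => exact ⟨0, rfl⟩
  | cons v t ih =>
    obtain ⟨a, ha⟩ := ih (fun w hw => hx w (Multiset.mem_cons_of_mem hw))
    refine ⟨⟨v.1, hx v (Multiset.mem_cons_self v t)⟩ ::ₘ a, ?_⟩
    erw [Multiset.map_cons, ha]
    rfl

include hsat in
lemma key {x y : Multiset (G.restrict H' hher').V}
    (h : AddConGen.Rel ((G.restrict H' hher').spRel ⟨s, hsub hs⟩) x y) :
    ((∀ v ∈ x, v.1 ∈ H) ↔ (∀ v ∈ y, v.1 ∈ H)) ∧
    ((∀ v ∈ x, v.1 ∈ H) → ∃ a b : Multiset (G.restrict H hher).V,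
       a.map (j G H H' hher hher' hsub) = x ∧
       b.map (j G H H' hher hher' hsub) = y ∧
       (G.restrict H hher).spCon ⟨s, hs⟩ a b) := by
  induction h with
  | of x y hxy =>
    rcases hxy with ⟨rfl, rfl⟩ | ⟨v, hns, rfl, rfl⟩
    · constructor
      · constructor
        · intro _ w hw; exact absurd hw (Multiset.notMem_zero w)
        · intro _ w hw
          erw [Multiset.mem_singleton] at hw
          subst hw; exact hs
      · intro _
        refine ⟨{⟨s, hs⟩}, 0, ?_, rfl, ?_⟩
        · erw [Multiset.map_singleton]; rfl
        · exact AddConGen.Rel.of _ _ (Or.inl ⟨rfl, rfl⟩)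
    · -- toppling at v with card d ≥ 1
      have hd : 1 ≤ ((G.restrict H' hher').outEdges v).card := by
        rw [Finset.one_le_card]
        have hns' := hns
        rw [DGraph.IsSink] at hns'
        push_neg at hns'
        obtain ⟨e, he⟩ := hns'
        exact ⟨e, by simp [DGraph.outEdges, he]⟩
      -- v.1 nonsink in G
      have hnsG : ¬ G.IsSink v.1 := by
        rw [← restrict_isSink_iff G H' hher' v]; exact hns
      -- membership descriptions
      have hMemL : (∀ w ∈ Multiset.replicate ((G.restrict H' hher').outEdges v).card v,
          w.1 ∈ H) ↔ v.1 ∈ H := by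
        constructor
        · intro hw
          exact hw v (Multiset.mem_replicate.2 ⟨by omega, rfl⟩)
        · intro hv w hw
          rw [(Multiset.eq_of_mem_replicate hw : w = v)]; exact hv
      have hMemR : (∀ w ∈ ((G.restrict H' hher').outEdges v).val.map
          (G.restrict H' hher').rng, w.1 ∈ H) ↔
          (∀ e : G.E, G.src e = v.1 → G.rng e ∈ H) := by
        constructor
        · intro hw e he
          have heH' : G.src e ∈ H' := he ▸ v.2
          have : (⟨e, heH'⟩ : {e : G.E // G.src e ∈ H'}) ∈
              (G.restrict H' hher').outEdges v := by
            simp only [DGraph.outEdges, Finset.mem_filter, Finset.mem_univ, true_and]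
            exact (@Finset.mem_filter _ _ (fun e => (G.restrict H' hher').decV _ v) _ _).2 ⟨Finset.mem_univ _, Subtype.ext he⟩
          exact hw _ (Multiset.mem_map_of_mem _ this)
        · intro he w hw
          rw [Multiset.mem_map] at hw
          obtain ⟨e, he', rfl⟩ := hw
          simp only [Finset.mem_val, DGraph.outEdges, Finset.mem_filter, Finset.mem_univ,
            true_and] at he'
          exact he e.1 (congrArg Subtype.val he')
      have hiff : (∀ w ∈ Multiset.replicate ((G.restrict H' hher').outEdges v).card v,
            w.1 ∈ H) ↔
          (∀ w ∈ ((G.restrict H' hher').outEdges v).val.map (G.restrict H' hher').rng,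
            w.1 ∈ H) := by
        rw [hMemL, hMemR]
        constructor
        · intro hv e he
          exact hher e (he ▸ hv)
        · intro he
          exact hsat v.1 hnsG he
      refine ⟨hiff, ?_⟩
      intro hL
      have hvH : v.1 ∈ H := hMemL.1 hL
      set w : (G.restrict H hher).V := ⟨v.1, hvH⟩ with hw
      have hjw : j G H H' hher hher' hsub w = v := Subtype.ext rfl
      have hcard : ((G.restrict H hher).outEdges w).card
          = ((G.restrict H' hher').outEdges v).card := by
        rw [restrict_outEdges_card, restrict_outEdges_card]
      refine ⟨Multiset.replicate ((G.restrict H hher).outEdges w).card w,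
        ((G.restrict H hher).outEdges w).val.map (G.restrict H hher).rng, ?_, ?_, ?_⟩
      · rw [Multiset.map_replicate, hjw, hcard]
      · apply Multiset.map_injective (Subtype.val_injective)
        erw [map_val_map_j, restrict_ranges, restrict_ranges]
      · refine AddConGen.Rel.of _ _ (Or.inr ⟨w, ?_, rfl, rfl⟩)
        rw [restrict_isSink_iff]; exact hnsG
  | refl x =>
    refine ⟨Iff.rfl, fun hx => ?_⟩
    obtain ⟨a, ha⟩ := exists_pre G H H' hher hher' hsub x hx
    exact ⟨a, a, ha, ha, AddConGen.Rel.refl a⟩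
  | symm _ ih =>
    refine ⟨ih.1.symm, fun hy => ?_⟩
    obtain ⟨a, b, ha, hb, hab⟩ := ih.2 (ih.1.2 hy)
    exact ⟨b, a, hb, ha, AddConGen.Rel.symm hab⟩
  | trans _ _ ih1 ih2 =>
    refine ⟨ih1.1.trans ih2.1, fun hx => ?_⟩
    obtain ⟨a, b, ha, hb, hab⟩ := ih1.2 hx
    obtain ⟨b', c, hb', hc, hbc⟩ := ih2.2 (ih1.1.1 hx)
    have : b = b' :=
      Multiset.map_injective (j_injective G H H' hher hher' hsub) (hb.trans hb'.symm)
    subst this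
    exact ⟨a, c, ha, hc, AddConGen.Rel.trans hab hbc⟩
  | add _ _ ih1 ih2 =>
    rename_i w x y z _ _
    constructor
    · constructor
      · intro h
        intro u hu
        rw [Multiset.mem_add] at hu
        rcases hu with hu | hu
        · exact ih1.1.1 (fun p hp => h p (Multiset.mem_add.2 (Or.inl hp))) u hu
        · exact ih2.1.1 (fun p hp => h p (Multiset.mem_add.2 (Or.inr hp))) u hu
      · intro h u hu
        rw [Multiset.mem_add] at hu
        rcases hu with hu | hu
        · exact ih1.1.2 (fun p hp => h p (Multiset.mem_add.2 (Or.inl hp))) u hu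
        · exact ih2.1.2 (fun p hp => h p (Multiset.mem_add.2 (Or.inr hp))) u hu
    · intro h
      obtain ⟨a, b, ha, hb, hab⟩ := ih1.2 (fun p hp => h p (Multiset.mem_add.2 (Or.inl hp)))
      obtain ⟨a', b', ha', hb', hab'⟩ := ih2.2 (fun p hp => h p (Multiset.mem_add.2 (Or.inr hp)))
      exact ⟨a + a', b + b', by rw [Multiset.map_add, ha, ha'],
        by rw [Multiset.map_add, hb, hb'], AddConGen.Rel.add hab hab'⟩

end Main
end SPEmbedAux


/-- For nested nonempty saturated hereditary subsets `H ⊆ H'`, the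
canonical map `SP(E_H) → SP(E_{H'})` is a well-defined injective monoid homomorphism. -/
theorem sp_restrict_mono_embedding (G : DGraph) (s : G.V) (hG : G.IsSandpile s)
    (H H' : Finset G.V)
    (hne : H.Nonempty) (hher : G.Hereditary H) (hsat : G.Saturated H)
    (hne' : H'.Nonempty) (hher' : G.Hereditary H') (hsat' : G.Saturated H')
    (hsub : H ⊆ H') (hs : s ∈ H) :
    ∃ ψ : (G.restrict H hher).SP ⟨s, hs⟩ →+ (G.restrict H' hher').SP ⟨s, hsub hs⟩,
      (∀ a : Multiset {v : G.V // v ∈ H},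
        ψ ((G.restrict H hher).spMk ⟨s, hs⟩ a)
          = (G.restrict H' hher').spMk ⟨s, hsub hs⟩
              (a.map fun v => ⟨v.1, hsub v.2⟩)) ∧
      Function.Injective ψ := by
  classical
  set jj : (G.restrict H hher).V → (G.restrict H' hher').V :=
    SPEmbedAux.j G H H' hher hher' hsub with hjj
  have hjeq : ∀ v : (G.restrict H hher).V,
      jj v = (⟨v.1, hsub v.2⟩ : (G.restrict H' hher').V) := fun v => rfl
  -- the map on free monoids
  let m : Multiset (G.restrict H hher).V →+ Multiset (G.restrict H' hher').V :=
    { toFun := fun a => a.map jj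
      map_zero' := rfl
      map_add' := fun a b => Multiset.map_add jj a b }
  let f : Multiset (G.restrict H hher).V →+ (G.restrict H' hher').SP ⟨s, hsub hs⟩ :=
    (((G.restrict H' hher').spCon ⟨s, hsub hs⟩).mk').comp m
  have hle : (G.restrict H hher).spCon ⟨s, hs⟩ ≤ AddCon.ker f := by
    apply AddCon.addConGen_le.2
    intro x y hxy
    rw [AddCon.ker_rel]
    exact ((G.restrict H' hher').spCon ⟨s, hsub hs⟩).eq.2
      (AddConGen.Rel.of _ _ (SPEmbedAux.rel_fwd G s H H' hher hher' hsub hs hxy))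
  refine ⟨AddCon.lift _ f hle, fun a => ?_, ?_⟩
  · show AddCon.lift _ f hle (((G.restrict H hher).spCon ⟨s, hs⟩).mk' a) = _
    erw [AddCon.lift_mk']
    rfl
  · intro x y hxy
    obtain ⟨a, rfl⟩ := AddCon.mk'_surjective x
    obtain ⟨b, rfl⟩ := AddCon.mk'_surjective y
    erw [AddCon.lift_mk' (H := hle), AddCon.lift_mk' (H := hle)] at hxy
    have hcon : ((G.restrict H' hher').spCon ⟨s, hsub hs⟩) (a.map jj) (b.map jj) :=
      ((G.restrict H' hher').spCon ⟨s, hsub hs⟩).eq.1 hxy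
    have hrel : AddConGen.Rel ((G.restrict H' hher').spRel ⟨s, hsub hs⟩)
        (a.map jj) (b.map jj) := hcon
    have hInH : ∀ v ∈ a.map jj, v.1 ∈ H := by
      intro v hv
      rw [Multiset.mem_map] at hv
      obtain ⟨w, _, rfl⟩ := hv
      exact w.2
    obtain ⟨a', b', ha', hb', hab⟩ :=
      (SPEmbedAux.key G s H H' hher hsat hher' hsub hs hrel).2 hInH
    have ha : a' = a :=
      Multiset.map_injective (SPEmbedAux.j_injective G H H' hher hher' hsub) ha'
    have hb : b' = b :=
      Multiset.map_injective (SPEmbedAux.j_injective G H H' hher hher' hsub) hb'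
    subst ha; subst hb
    exact ((G.restrict H hher).spCon ⟨s, hs⟩).eq.2 hab
end

section
/- Let E be a sandpile graph and let S_E be the set of vertices of E from which no cycle of E is reachable. Then S_E is a nonempty saturated hereditary subset of E⁰, and the image of the canonical embedding SP(E_{S_E}) → SP(E) is exactly the set of invertible elements of the monoid SP(E) (the unit group Z(SP(E))). -/
namespace DGraph
variable (G : DGraph)

lemma mem_sinkSet_iff (v : G.V) :
    v ∈ G.sinkSet ↔ ¬ ∃ u, G.Reaches v u ∧ G.OnCycle u := by
  classical
  simp [DGraph.sinkSet]

lemma sinkSet_hered : G.Hereditary G.sinkSet := by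
  intro e he
  rw [mem_sinkSet_iff] at he ⊢
  rintro ⟨u, hru, hcu⟩
  exact he ⟨u, Relation.ReflTransGen.head ⟨e, rfl, rfl⟩ hru, hcu⟩

lemma sink_mem_sinkSet (s : G.V) (hs : G.IsSink s) : s ∈ G.sinkSet := by
  rw [mem_sinkSet_iff]
  rintro ⟨u, hru, hcu⟩
  have hu : u = s := by
    rcases hru.cases_head with h | ⟨c, ⟨e, he, _⟩, _⟩
    · exact h.symm
    · exact absurd he (hs e)
  subst hu
  rcases Relation.TransGen.head'_iff.mp hcu with ⟨c, ⟨e, he, _⟩, _⟩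
  exact hs e he

lemma sinkSet_satur : G.Saturated G.sinkSet := by
  intro v hns hall
  rw [mem_sinkSet_iff]
  rintro ⟨u, hru, hcu⟩
  rcases hru.cases_head with heq | ⟨w, ⟨e, he, hre⟩, hwu⟩
  · subst heq
    rcases Relation.TransGen.head'_iff.mp hcu with ⟨w, ⟨e, he, hre⟩, hwv⟩
    have hw := hall e he
    rw [hre, mem_sinkSet_iff] at hw
    exact hw ⟨v, hwv, hcu⟩
  · have hw := hall e he
    rw [hre, mem_sinkSet_iff] at hw
    exact hw ⟨u, hwu, hcu⟩

lemma escape_edge (v : G.V) (hv : v ∉ G.sinkSet) :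
    ∃ e : G.E, G.src e = v ∧ G.rng e ∉ G.sinkSet := by
  rw [mem_sinkSet_iff, not_not] at hv
  obtain ⟨u, hru, hcu⟩ := hv
  rcases hru.cases_head with heq | ⟨w, ⟨e, he, hre⟩, hwu⟩
  · subst heq
    rcases Relation.TransGen.head'_iff.mp hcu with ⟨w, ⟨e, he, hre⟩, hwv⟩
    refine ⟨e, he, ?_⟩
    rw [mem_sinkSet_iff, not_not, hre]
    exact ⟨v, hwv, hcu⟩
  · refine ⟨e, he, ?_⟩
    rw [mem_sinkSet_iff, not_not, hre]
    exact ⟨u, hwu, hcu⟩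

lemma spMk_singleton_sink (s : G.V) : G.spMk s ({s} : Multiset G.V) = 0 := by
  have h : (G.spCon s) {s} 0 := by
    apply AddConGen.Rel.of
    exact Or.inl ⟨rfl, rfl⟩
  have h2 : (G.spCon s).mk' {s} = (G.spCon s).mk' 0 := (AddCon.eq _).mpr h
  rw [DGraph.spMk, h2, map_zero]

lemma spMk_add (s : G.V) (a b : Multiset G.V) :
    G.spMk s (a + b) = G.spMk s a + G.spMk s b := map_add _ _ _

lemma spMk_eq_sum (s : G.V) (a : Multiset G.V) :
    G.spMk s a = (a.map (fun v => G.spMk s ({v} : Multiset G.V))).sum := by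
  induction a using Multiset.induction with
  | empty => exact map_zero _
  | cons v m ih =>
    have h : v ::ₘ m = {v} + m := by rw [Multiset.singleton_add]
    rw [h, spMk_add, ih, Multiset.map_add, Multiset.sum_add, Multiset.map_singleton,
      Multiset.sum_singleton]

lemma isAddUnit_msum {M : Type} [AddCommMonoid M] (m : Multiset M)
    (h : ∀ x ∈ m, IsAddUnit x) : IsAddUnit m.sum := by
  induction m using Multiset.induction with
  | empty => simp
  | cons a t ih =>
    rw [Multiset.sum_cons]
    exact (h a (Multiset.mem_cons_self a t)).add
      (ih fun x hx => h x (Multiset.mem_cons_of_mem hx))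

lemma unit_of_mem_sinkSet (s : G.V) (hG : G.IsSandpile s) :
    ∀ v ∈ G.sinkSet, IsAddUnit (G.spMk s ({v} : Multiset G.V)) := by
  classical
  let T := {v : G.V // v ∈ G.sinkSet}
  let r : T → T → Prop := fun a b => Relation.TransGen G.Step b.1 a.1
  haveI : IsTrans T r := ⟨fun a b c hab hbc => hbc.trans hab⟩
  haveI : IsIrrefl T r := ⟨fun a ha => by
    have h := (G.mem_sinkSet_iff a.1).1 a.2
    exact h ⟨a.1, Relation.ReflTransGen.refl, ha⟩⟩
  have hwf : WellFounded r := Finite.wellFounded_of_trans_of_irrefl r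
  have key : ∀ t : T, IsAddUnit (G.spMk s ({t.1} : Multiset G.V)) := by
    intro t
    induction t using hwf.induction with
    | _ t IH =>
      by_cases hts : t.1 = s
      · rw [hts, G.spMk_singleton_sink s]; exact isAddUnit_zero
      · have hns : ¬ G.IsSink t.1 := fun h => hts (hG.2.1 t.1 h)
        have hrel : (G.spCon s) (Multiset.replicate (G.outEdges t.1).card t.1)
            ((G.outEdges t.1).val.map G.rng) := by
          apply AddConGen.Rel.of
          exact Or.inr ⟨t.1, hns, rfl, rfl⟩
        have heq : G.spMk s (Multiset.replicate (G.outEdges t.1).card t.1)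
            = G.spMk s ((G.outEdges t.1).val.map G.rng) := (AddCon.eq _).mpr hrel
        -- the right-hand side is a unit
        have hrunit : IsAddUnit (G.spMk s ((G.outEdges t.1).val.map G.rng)) := by
          rw [G.spMk_eq_sum]
          apply isAddUnit_msum
          intro x hx
          rw [Multiset.mem_map] at hx
          obtain ⟨u, hu, rfl⟩ := hx
          rw [Multiset.mem_map] at hu
          obtain ⟨e, he, rfl⟩ := hu
          have hsrc : G.src e = t.1 := by
            have := he
            rw [DGraph.outEdges, Finset.mem_val, Finset.mem_filter] at this
            exact this.2
          have hmem : G.rng e ∈ G.sinkSet := G.sinkSet_hered e (hsrc ▸ t.2)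
          exact IH ⟨G.rng e, hmem⟩ (Relation.TransGen.single ⟨e, hsrc, rfl⟩)
        -- out-degree is positive
        have hd : 0 < (G.outEdges t.1).card := by
          rw [DGraph.IsSink] at hns
          push_neg at hns
          obtain ⟨e, he⟩ := hns
          exact Finset.card_pos.mpr ⟨e, by
            rw [DGraph.outEdges, Finset.mem_filter]; exact ⟨Finset.mem_univ e, he⟩⟩
        obtain ⟨k, hk⟩ : ∃ k, (G.outEdges t.1).card = k + 1 :=
          ⟨(G.outEdges t.1).card - 1, (Nat.succ_pred_eq_of_pos hd).symm⟩
        rw [hk, Multiset.replicate_succ] at heq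
        have hcons : t.1 ::ₘ Multiset.replicate k t.1
            = {t.1} + Multiset.replicate k t.1 := by rw [Multiset.singleton_add]
        rw [hcons, G.spMk_add] at heq
        have : IsAddUnit (G.spMk s ({t.1} : Multiset G.V)
            + G.spMk s (Multiset.replicate k t.1)) := heq ▸ hrunit
        exact isAddUnit_of_add_isAddUnit_left this
  intro v hv
  exact key ⟨v, hv⟩

/-- weight function detecting vertices outside `S_E`. -/
noncomputable def wt (v : G.V) : WithTop ℕ := by
  classical exact if v ∈ G.sinkSet then 0 else ⊤

/-- Additive extension of the weight to the free commutative monoid. -/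
noncomputable def wtHom : Multiset G.V →+ WithTop ℕ where
  toFun m := (m.map G.wt).sum
  map_zero' := by simp
  map_add' a b := by rw [Multiset.map_add, Multiset.sum_add]

lemma msum_eq_top {m : Multiset (WithTop ℕ)} (h : ⊤ ∈ m) : m.sum = ⊤ := by
  obtain ⟨t, rfl⟩ := Multiset.exists_cons_of_mem h
  rw [Multiset.sum_cons, top_add]

lemma spCon_le_ker (s : G.V) (hG : G.IsSandpile s) :
    G.spCon s ≤ AddCon.ker G.wtHom := by
  apply AddCon.addConGen_le.mpr
  intro a b hab
  rw [AddCon.ker_rel]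
  rcases hab with ⟨ha, hb⟩ | ⟨v, hns, ha, hb⟩
  · subst ha; subst hb
    show ((({s} : Multiset G.V)).map G.wt).sum = ((0 : Multiset G.V).map G.wt).sum
    rw [Multiset.map_singleton, Multiset.sum_singleton]
    simp [DGraph.wt, G.sink_mem_sinkSet s hG.1]
  · subst ha; subst hb
    show ((Multiset.replicate (G.outEdges v).card v).map G.wt).sum
        = (((G.outEdges v).val.map G.rng).map G.wt).sum
    have hd : 0 < (G.outEdges v).card := by
      rw [DGraph.IsSink] at hns
      push_neg at hns
      obtain ⟨e, he⟩ := hns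
      exact Finset.card_pos.mpr ⟨e, by
        rw [DGraph.outEdges, Finset.mem_filter]; exact ⟨Finset.mem_univ e, he⟩⟩
    by_cases hv : v ∈ G.sinkSet
    · have h1 : ((Multiset.replicate (G.outEdges v).card v).map G.wt).sum = 0 := by
        apply Multiset.sum_eq_zero
        intro x hx
        rw [Multiset.map_replicate] at hx
        rw [Multiset.eq_of_mem_replicate hx]
        simp [DGraph.wt, hv]
      have h2 : (((G.outEdges v).val.map G.rng).map G.wt).sum = 0 := by
        apply Multiset.sum_eq_zero
        intro x hx
        rw [Multiset.mem_map] at hx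
        obtain ⟨u, hu, rfl⟩ := hx
        rw [Multiset.mem_map] at hu
        obtain ⟨e, he, rfl⟩ := hu
        have hsrc : G.src e = v := by
          rw [Finset.mem_val, DGraph.outEdges, Finset.mem_filter] at he
          exact he.2
        have : G.rng e ∈ G.sinkSet := G.sinkSet_hered e (hsrc ▸ hv)
        simp [DGraph.wt, this]
      rw [h1, h2]
    · have h1 : ((Multiset.replicate (G.outEdges v).card v).map G.wt).sum = ⊤ := by
        apply msum_eq_top
        rw [Multiset.map_replicate]
        have : G.wt v = ⊤ := by simp [DGraph.wt, hv]
        rw [this]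
        exact Multiset.mem_replicate.mpr ⟨hd.ne', rfl⟩
      have h2 : (((G.outEdges v).val.map G.rng).map G.wt).sum = ⊤ := by
        apply msum_eq_top
        obtain ⟨e, hsrc, hout⟩ := G.escape_edge v hv
        have he : e ∈ (G.outEdges v).val := by
          rw [Finset.mem_val, DGraph.outEdges, Finset.mem_filter]
          exact ⟨Finset.mem_univ e, hsrc⟩
        have hw : G.wt (G.rng e) = ⊤ := by simp [DGraph.wt, hout]
        rw [← hw]
        exact Multiset.mem_map_of_mem _ (Multiset.mem_map_of_mem _ he)
      rw [h1, h2]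

end DGraph
/-- `S_E` is a nonempty saturated hereditary subset, and the image of
the canonical embedding `SP(E_{S_E}) → SP(E)` is exactly the unit group of `SP(E)`. -/
theorem sp_sinkSet_units (G : DGraph) (s : G.V) (hG : G.IsSandpile s) :
    G.sinkSet.Nonempty ∧ G.Hereditary G.sinkSet ∧ G.Saturated G.sinkSet ∧
      G.spImage s G.sinkSet = {x : G.SP s | IsAddUnit x} := by
  classical
  refine ⟨⟨s, G.sink_mem_sinkSet s hG.1⟩, G.sinkSet_hered, G.sinkSet_satur, ?_⟩
  ext x
  simp only [Set.mem_setOf_eq]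
  constructor
  · rintro ⟨a, rfl⟩
    show IsAddUnit (G.spMk s (Multiset.map Subtype.val a))
    rw [G.spMk_eq_sum]
    apply DGraph.isAddUnit_msum
    intro y hy
    rw [Multiset.mem_map] at hy
    obtain ⟨v, hv, rfl⟩ := hy
    rw [Multiset.mem_map] at hv
    obtain ⟨t, ht, rfl⟩ := hv
    exact G.unit_of_mem_sinkSet s hG t.1 t.2
  · intro hx
    obtain ⟨a, rfl⟩ := AddCon.mk'_surjective x
    -- apply the weight homomorphism
    obtain ⟨u, hu⟩ := hx
    have hadd : (G.spCon s).mk' a + ↑(-u) = 0 := AddUnits.add_neg_of_eq hu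
    set φ := (G.spCon s).lift G.wtHom (G.spCon_le_ker s hG) with hφ
    have h0 : φ ((G.spCon s).mk' a) = 0 := by
      have := congrArg φ hadd
      rw [map_add, map_zero] at this
      exact (add_eq_zero.mp this).1
    rw [AddCon.lift_mk'] at h0
    have hall : ∀ v ∈ a, v ∈ G.sinkSet := by
      intro v hv
      have hwv : G.wt v = 0 := by
        have := Multiset.sum_eq_zero_iff.mp h0 (G.wt v)
          (Multiset.mem_map_of_mem _ hv)
        exact this
      by_contra hmem
      simp [DGraph.wt, hmem] at hwv
    refine ⟨a.attach.map fun t => (⟨t.1, hall t.1 t.2⟩ : {v : G.V // v ∈ G.sinkSet}), ?_⟩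
    show G.spMk s (((a.attach.map fun t => (⟨t.1, hall t.1 t.2⟩ :
        {v : G.V // v ∈ G.sinkSet}))).map Subtype.val) = (G.spCon s).mk' a
    have hmaps : ((a.attach.map fun t => (⟨t.1, hall t.1 t.2⟩ :
        {v : G.V // v ∈ G.sinkSet}))).map Subtype.val = a := by
      rw [Multiset.map_map]
      simp
    rw [hmaps]
    rfl
end

section
/- Let E be a sandpile graph and H a nonempty saturated hereditary subset of E⁰. Then the image of the canonical embedding SP(E_H) → SP(E) is an order-ideal of SP(E) containing the set of invertible elements of SP(E), and it equals the order-ideal of SP(E) generated by the classes of the vertices in H, namely {m ∈ SP(E) : m ≤ h₁ + ⋯ + h_n for some n ≥ 1 and classes h_i of vertices in H}. -/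
section AuxProof

variable (G : DGraph)

/-- The "supported in H" invariant congruence. -/
private def hCon (H : Finset G.V) : AddCon (Multiset G.V) where
  r a b := (∀ v ∈ a, v ∈ H) ↔ (∀ v ∈ b, v ∈ H)
  iseqv := ⟨fun _ => Iff.rfl, Iff.symm, Iff.trans⟩
  add' := by
    intro a b c d h1 h2
    simp only [Multiset.mem_add, or_imp, forall_and]
    constructor
    · rintro ⟨x, y⟩; exact ⟨h1.mp x, h2.mp y⟩
    · rintro ⟨x, y⟩; exact ⟨h1.mpr x, h2.mpr y⟩

private lemma mem_of_reaches {H : Finset G.V} (hher : G.Hereditary H) {u w : G.V}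
    (h : G.Reaches u w) (hu : u ∈ H) : w ∈ H := by
  induction h with
  | refl => exact hu
  | tail _ hstep ih =>
      obtain ⟨e, he1, he2⟩ := hstep
      exact he2 ▸ hher e (by rw [he1]; exact ih)

private lemma spCon_le_hCon {s : G.V} (hG : G.IsSandpile s) {H : Finset G.V}
    (hne : H.Nonempty) (hher : G.Hereditary H) (hsat : G.Saturated H) :
    G.spCon s ≤ hCon G H := by
  have hsH : s ∈ H := by
    obtain ⟨v, hv⟩ := hne
    exact mem_of_reaches G hher (hG.2.2 v) hv
  refine AddCon.addConGen_le.2 ?_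
  rintro a b (⟨rfl, rfl⟩ | ⟨v, hv, rfl, rfl⟩)
  · show _ ↔ _
    simp [hsH]
  · show (∀ x ∈ _, x ∈ H) ↔ (∀ x ∈ _, x ∈ H)
    by_cases hvH : v ∈ H
    · refine iff_of_true ?_ ?_
      · intro x hx
        rw [Multiset.eq_of_mem_replicate hx]; exact hvH
      · intro x hx
        obtain ⟨e, he, rfl⟩ := Multiset.mem_map.1 hx
        refine hher e ?_
        have : G.src e = v := (Finset.mem_filter.1 he).2
        rw [this]; exact hvH
    · refine iff_of_false ?_ ?_
      · intro hall
        simp only [DGraph.IsSink, not_forall, not_not] at hv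
        obtain ⟨e, he⟩ := hv
        have hem : e ∈ G.outEdges v := Finset.mem_filter.2 ⟨Finset.mem_univ e, he⟩
        have hcard : (G.outEdges v).card ≠ 0 := by
          intro h0
          rw [Finset.card_eq_zero] at h0
          simp [h0] at hem
        exact hvH (hall v (Multiset.mem_replicate.2 ⟨hcard, rfl⟩))
      · intro hall
        refine hvH (hsat v hv ?_)
        intro e he
        refine hall (G.rng e) (Multiset.mem_map.2 ⟨e, ?_, rfl⟩)
        exact Finset.mem_filter.2 ⟨Finset.mem_univ e, he⟩

private lemma spMk_eq_supp {s : G.V} (hG : G.IsSandpile s) {H : Finset G.V}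
    (hne : H.Nonempty) (hher : G.Hereditary H) (hsat : G.Saturated H)
    {a b : Multiset G.V} (h : G.spMk s a = G.spMk s b) :
    (∀ v ∈ a, v ∈ H) ↔ (∀ v ∈ b, v ∈ H) := by
  have h1 : AddCon.ker (G.spCon s).mk' a b := (AddCon.ker_rel _).mpr h
  rw [AddCon.mk'_ker] at h1
  exact spCon_le_hCon G hG hne hher hsat h1

private lemma mem_spImage_iff {s : G.V} {H : Finset G.V} (x : G.SP s) :
    x ∈ G.spImage s H ↔ ∃ b : Multiset G.V, (∀ v ∈ b, v ∈ H) ∧ x = G.spMk s b := by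
  constructor
  · rintro ⟨a, rfl⟩
    refine ⟨a.map Subtype.val, ?_, rfl⟩
    intro v hv
    obtain ⟨u, _, rfl⟩ := Multiset.mem_map.1 hv
    exact u.2
  · rintro ⟨b, hb, rfl⟩
    refine ⟨b.attach.map (fun x => (⟨x.1, hb x.1 x.2⟩ : {v : G.V // v ∈ H})), ?_⟩
    show G.spMk s _ = G.spMk s b
    congr 1
    rw [Multiset.map_map]
    exact Multiset.attach_map_val b

end AuxProof

/-- The image of `SP(E_H)` in `SP(E)` is an order-ideal containing the
units, and it is the order-ideal generated by the classes of vertices in `H`. -/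
theorem sp_restrict_orderIdeal (G : DGraph) (s : G.V) (hG : G.IsSandpile s)
    (H : Finset G.V) (hne : H.Nonempty) (hher : G.Hereditary H) (hsat : G.Saturated H) :
    IsOrderIdeal (G.spImage s H) ∧
    {x : G.SP s | IsAddUnit x} ⊆ G.spImage s H ∧
    G.spImage s H =
      {m : G.SP s | ∃ a : Multiset G.V, a ≠ 0 ∧ (∀ v ∈ a, v ∈ H) ∧ cle m (G.spMk s a)} := by
  classical
  have surj := AddCon.mk'_surjective (c := G.spCon s)
  have hmap : ∀ a b : Multiset G.V, G.spMk s (a + b) = G.spMk s a + G.spMk s b :=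
    fun a b => map_add (G.spCon s).mk' a b
  have h0 : (0 : G.SP s) = G.spMk s 0 := (map_zero (G.spCon s).mk').symm
  have supp_of_mem : ∀ b : Multiset G.V, G.spMk s b ∈ G.spImage s H → ∀ v ∈ b, v ∈ H := by
    intro b hb
    obtain ⟨c, hc, hbc⟩ := (mem_spImage_iff G _).1 hb
    exact (spMk_eq_supp G hG hne hher hsat hbc).mpr hc
  have mem_of_supp : ∀ b : Multiset G.V, (∀ v ∈ b, v ∈ H) → G.spMk s b ∈ G.spImage s H :=
    fun b hb => (mem_spImage_iff G _).2 ⟨b, hb, rfl⟩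
  have hsplit : ∀ x y : G.SP s, x + y ∈ G.spImage s H →
      x ∈ G.spImage s H ∧ y ∈ G.spImage s H := by
    intro x y hxy
    obtain ⟨a, rfl⟩ := surj x
    obtain ⟨b, rfl⟩ := surj y
    have hxy' : G.spMk s (a + b) ∈ G.spImage s H := by rw [hmap]; exact hxy
    have := supp_of_mem _ hxy' 
    constructor
    · exact mem_of_supp a fun v hv => this v (Multiset.mem_add.2 (Or.inl hv))
    · exact mem_of_supp b fun v hv => this v (Multiset.mem_add.2 (Or.inr hv))
  have hzero : (0 : G.SP s) ∈ G.spImage s H := by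
    rw [h0]; exact mem_of_supp 0 (by simp)
  refine ⟨⟨hzero, ?_, hsplit⟩, ?_, ?_⟩
  · intro x hx y hy
    obtain ⟨a, ha, rfl⟩ := (mem_spImage_iff G _).1 hx
    obtain ⟨b, hb, rfl⟩ := (mem_spImage_iff G _).1 hy
    rw [← hmap]
    exact mem_of_supp _ fun v hv => (Multiset.mem_add.1 hv).elim (ha v) (hb v)
  · intro x hx
    obtain ⟨u, rfl⟩ := hx
    have : (u : G.SP s) + ((-u : AddUnits (G.SP s)) : G.SP s) = 0 := u.add_neg
    exact (hsplit _ _ (this ▸ hzero)).1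
  · ext m
    constructor
    · intro hm
      obtain ⟨b, hb, rfl⟩ := (mem_spImage_iff G _).1 hm
      obtain ⟨h0v, hh0⟩ := hne
      refine ⟨b + {h0v}, by simp, ?_, G.spMk s {h0v}, hmap b {h0v}⟩
      intro v hv
      rcases Multiset.mem_add.1 hv with h | h
      · exact hb v h
      · rw [Multiset.mem_singleton.1 h]; exact hh0
    · rintro ⟨a, hane, haH, z, hz⟩
      have : m + z ∈ G.spImage s H := hz ▸ mem_of_supp a haH
      exact (hsplit m z this).1
end

section
/- Let E be a sandpile graph. The map φ : 𝓗_E → 𝓛(SP(E)) sending a nonempty saturated hereditary subset H to the image of the canonical embedding SP(E_H) → SP(E) is an order isomorphism of lattices, with inverse sending an order-ideal I of SP(E) to {v ∈ E⁰ : the class of v lies in I}. -/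
namespace SandpileAux

open DGraph

variable (G : DGraph) (s : G.V)

lemma mem_of_reaches {H : Finset G.V} (hher : G.Hereditary H) {u w : G.V}
    (hr : G.Reaches u w) (hu : u ∈ H) : w ∈ H := by
  induction hr with
  | refl => exact hu
  | tail _ hbc ih =>
      obtain ⟨e, hsrc, hrng⟩ := hbc
      exact hrng ▸ hher e (hsrc ▸ ih)

lemma sink_mem (hG : G.IsSandpile s) {H : Finset G.V} (hne : H.Nonempty)
    (hher : G.Hereditary H) : s ∈ H := by
  obtain ⟨v, hv⟩ := hne
  exact mem_of_reaches G hher (hG.2.2 v) hv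

lemma exists_outEdge {v : G.V} (h : ¬ G.IsSink v) : ∃ e, e ∈ G.outEdges v := by
  simp only [DGraph.IsSink, not_forall, not_not] at h
  obtain ⟨e, he⟩ := h
  exact ⟨e, Finset.mem_filter.2 ⟨Finset.mem_univ _, he⟩⟩

lemma outEdges_card_pos {v : G.V} (h : ¬ G.IsSink v) : 0 < (G.outEdges v).card := by
  obtain ⟨e, he⟩ := exists_outEdge G h
  exact Finset.card_pos.2 ⟨e, he⟩

lemma mem_outEdges {v : G.V} {e : G.E} : e ∈ G.outEdges v ↔ G.src e = v := by
  simp [DGraph.outEdges]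

/-- The "supported in `H`" invariant, as an additive congruence. -/
def suppCon (H : Finset G.V) : AddCon (Multiset G.V) where
  r a b := (∀ v ∈ a, v ∈ H) ↔ (∀ v ∈ b, v ∈ H)
  iseqv := ⟨fun _ => Iff.rfl, Iff.symm, Iff.trans⟩
  add' := by
    intro w x y z h₁ h₂
    constructor
    · intro h v hv
      rcases Multiset.mem_add.1 hv with hv | hv
      · exact h₁.1 (fun u hu => h u (Multiset.mem_add.2 (Or.inl hu))) v hv
      · exact h₂.1 (fun u hu => h u (Multiset.mem_add.2 (Or.inr hu))) v hv
    · intro h v hv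
      rcases Multiset.mem_add.1 hv with hv | hv
      · exact h₁.2 (fun u hu => h u (Multiset.mem_add.2 (Or.inl hu))) v hv
      · exact h₂.2 (fun u hu => h u (Multiset.mem_add.2 (Or.inr hu))) v hv

lemma spCon_le_suppCon (hG : G.IsSandpile s) {H : Finset G.V} (hne : H.Nonempty)
    (hher : G.Hereditary H) (hsat : G.Saturated H) : G.spCon s ≤ suppCon G H := by
  apply AddCon.addConGen_le.2
  intro a b hab
  rcases hab with ⟨rfl, rfl⟩ | ⟨v, hv, rfl, rfl⟩
  · constructor
    · intro _ u hu
      exact absurd hu (Multiset.notMem_zero u)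
    · intro _ u hu
      rw [Multiset.mem_singleton.1 hu]
      exact sink_mem G s hG hne hher
  · have hpos := outEdges_card_pos G hv
    constructor
    · intro h u hu
      obtain ⟨e, he, rfl⟩ := Multiset.mem_map.1 hu
      have hvH : v ∈ H := h v (Multiset.mem_replicate.2 ⟨hpos.ne', rfl⟩)
      have hsrc : G.src e = v := (mem_outEdges G).1 (Finset.mem_val.mp he)
      exact hher e (by rw [hsrc]; exact hvH)
    · intro h u hu
      rw [(Multiset.mem_replicate.1 hu).2]
      apply hsat v hv
      intro e he
      exact h (G.rng e) (Multiset.mem_map.2 ⟨e, Finset.mem_val.mpr ((mem_outEdges G).2 he), rfl⟩)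

lemma supp_iff_of_mk_eq (hG : G.IsSandpile s) {H : Finset G.V} (hne : H.Nonempty)
    (hher : G.Hereditary H) (hsat : G.Saturated H) {a b : Multiset G.V}
    (h : G.spMk s a = G.spMk s b) : (∀ v ∈ a, v ∈ H) ↔ (∀ v ∈ b, v ∈ H) :=
  spCon_le_suppCon G s hG hne hher hsat ((G.spCon s).eq.1 h)

lemma mem_spImage {H : Finset G.V} {x : G.SP s} :
    x ∈ G.spImage s H ↔ ∃ m : Multiset G.V, (∀ v ∈ m, v ∈ H) ∧ x = G.spMk s m := by
  constructor
  · rintro ⟨a, rfl⟩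
    refine ⟨a.map Subtype.val, ?_, rfl⟩
    intro v hv
    obtain ⟨u, _, rfl⟩ := Multiset.mem_map.1 hv
    exact u.2
  · rintro ⟨m, hm, rfl⟩
    refine ⟨m.attach.map fun u => (⟨u.1, hm u.1 u.2⟩ : {v : G.V // v ∈ H}), ?_⟩
    simp only [DGraph.spImage, DGraph.spMk, Multiset.map_map, Function.comp]
    rw [show (Multiset.map (fun u : {x // x ∈ m} => u.1) m.attach) = m from
      Multiset.attach_map_val m]

lemma spMk_add (a b : Multiset G.V) : G.spMk s (a + b) = G.spMk s a + G.spMk s b :=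
  map_add ((G.spCon s).mk') a b

lemma spMk_zero : G.spMk s 0 = 0 := map_zero ((G.spCon s).mk')

lemma spMk_surjective : Function.Surjective (G.spMk s) := AddCon.mk'_surjective

/-- Membership of a single vertex class in `spImage`. -/
lemma spMk_singleton_mem_spImage (hG : G.IsSandpile s) {H : Finset G.V} (hne : H.Nonempty)
    (hher : G.Hereditary H) (hsat : G.Saturated H) {v : G.V} :
    G.spMk s {v} ∈ G.spImage s H ↔ v ∈ H := by
  rw [mem_spImage]
  constructor
  · rintro ⟨m, hm, heq⟩
    exact (supp_iff_of_mk_eq G s hG hne hher hsat heq.symm).1 hm v (Multiset.mem_singleton_self v)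
  · intro hv
    exact ⟨{v}, fun u hu => (Multiset.mem_singleton.1 hu) ▸ hv, rfl⟩

lemma spImage_isOrderIdeal (hG : G.IsSandpile s) {H : Finset G.V} (hne : H.Nonempty)
    (hher : G.Hereditary H) (hsat : G.Saturated H) : IsOrderIdeal (G.spImage s H) := by
  refine ⟨?_, ?_, ?_⟩
  · exact (mem_spImage G s).2 ⟨0, fun v hv => absurd hv (Multiset.notMem_zero v),
      (spMk_zero G s).symm⟩
  · intro x hx y hy
    obtain ⟨m, hm, rfl⟩ := (mem_spImage G s).1 hx
    obtain ⟨n, hn, rfl⟩ := (mem_spImage G s).1 hy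
    refine (mem_spImage G s).2 ⟨m + n, ?_, (spMk_add G s m n).symm⟩
    intro v hv
    rcases Multiset.mem_add.1 hv with hv | hv
    · exact hm v hv
    · exact hn v hv
  · intro x y hxy
    obtain ⟨a, rfl⟩ := spMk_surjective G s x
    obtain ⟨b, rfl⟩ := spMk_surjective G s y
    obtain ⟨m, hm, heq⟩ := (mem_spImage G s).1 hxy
    rw [← spMk_add] at heq
    have hab : ∀ v ∈ a + b, v ∈ H :=
      (supp_iff_of_mk_eq G s hG hne hher hsat heq).2 hm
    constructor
    · exact (mem_spImage G s).2 ⟨a, fun v hv => hab v (Multiset.mem_add.2 (Or.inl hv)), rfl⟩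
    · exact (mem_spImage G s).2 ⟨b, fun v hv => hab v (Multiset.mem_add.2 (Or.inr hv)), rfl⟩

/-- The vertex set associated to an order-ideal. -/
noncomputable def vertSet (I : Set (G.SP s)) : Finset G.V := by
  classical exact Finset.univ.filter fun v => G.spMk s {v} ∈ I

lemma mem_vertSet {I : Set (G.SP s)} {v : G.V} : v ∈ vertSet G s I ↔ G.spMk s {v} ∈ I := by
  classical simp [vertSet]

lemma spMk_mem_of_forall {I : Set (G.SP s)} (hI : IsOrderIdeal I) (m : Multiset G.V)
    (hm : ∀ v ∈ m, G.spMk s {v} ∈ I) : G.spMk s m ∈ I := by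
  induction m using Multiset.induction with
  | empty => exact spMk_zero G s ▸ hI.1
  | cons u t ih =>
      have : (u ::ₘ t) = ({u} : Multiset G.V) + t := by
        simp [Multiset.singleton_add]
      rw [this, spMk_add]
      exact hI.2.1 _ (hm u (Multiset.mem_cons_self u t)) _
        (ih fun v hv => hm v (Multiset.mem_cons_of_mem hv))

lemma spMk_singleton_mem_of_mem {I : Set (G.SP s)} (hI : IsOrderIdeal I) {m : Multiset G.V}
    (hm : G.spMk s m ∈ I) {v : G.V} (hv : v ∈ m) : G.spMk s {v} ∈ I := by
  have : m = ({v} : Multiset G.V) + m.erase v := by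
    rw [Multiset.singleton_add, Multiset.cons_erase hv]
  rw [this, spMk_add] at hm
  exact (hI.2.2 _ _ hm).1

lemma spCon_of_rel {a b : Multiset G.V} (h : G.spRel s a b) : G.spCon s a b :=
  AddConGen.Rel.of a b h

lemma spMk_sink_eq_zero : G.spMk s {s} = 0 := by
  have h : G.spMk s {s} = G.spMk s 0 :=
    (G.spCon s).eq.2 (spCon_of_rel G s (Or.inl ⟨rfl, rfl⟩))
  rw [h, spMk_zero]

lemma spMk_topple {v : G.V} (hv : ¬ G.IsSink v) :
    G.spMk s (Multiset.replicate (G.outEdges v).card v) =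
      G.spMk s ((G.outEdges v).val.map G.rng) :=
  (G.spCon s).eq.2 (spCon_of_rel G s (Or.inr ⟨v, hv, rfl, rfl⟩))

lemma vertSet_props {I : Set (G.SP s)} (hI : IsOrderIdeal I) :
    (vertSet G s I).Nonempty ∧ G.Hereditary (vertSet G s I) ∧ G.Saturated (vertSet G s I) := by
  refine ⟨⟨s, (mem_vertSet G s).2 (by rw [spMk_sink_eq_zero]; exact hI.1)⟩, ?_, ?_⟩
  · intro e he
    rw [mem_vertSet] at he ⊢
    set v := G.src e with hv
    have hnsink : ¬ G.IsSink v := fun h => h e rfl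
    have hrep : G.spMk s (Multiset.replicate (G.outEdges v).card v) ∈ I := by
      apply spMk_mem_of_forall G s hI
      intro u hu
      rw [(Multiset.mem_replicate.1 hu).2]
      exact he
    rw [spMk_topple G s hnsink] at hrep
    exact spMk_singleton_mem_of_mem G s hI hrep
      (Multiset.mem_map.2 ⟨e, Finset.mem_val.mpr ((mem_outEdges G).2 rfl), rfl⟩)
  · intro v hnsink hr
    have hmem : G.spMk s ((G.outEdges v).val.map G.rng) ∈ I := by
      apply spMk_mem_of_forall G s hI
      intro u hu
      obtain ⟨e, he, rfl⟩ := Multiset.mem_map.1 hu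
      exact (mem_vertSet G s).1 (hr e ((mem_outEdges G).1 (Finset.mem_val.mp he)))
    rw [← spMk_topple G s hnsink] at hmem
    rw [mem_vertSet]
    exact spMk_singleton_mem_of_mem G s hI hmem
      (Multiset.mem_replicate.2 ⟨(outEdges_card_pos G hnsink).ne', rfl⟩)

lemma spImage_vertSet {I : Set (G.SP s)} (hI : IsOrderIdeal I) :
    G.spImage s (vertSet G s I) = I := by
  ext x
  rw [mem_spImage]
  constructor
  · rintro ⟨m, hm, rfl⟩
    exact spMk_mem_of_forall G s hI m fun v hv => (mem_vertSet G s).1 (hm v hv)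
  · intro hx
    obtain ⟨a, rfl⟩ := spMk_surjective G s x
    exact ⟨a, fun v hv => (mem_vertSet G s).2 (spMk_singleton_mem_of_mem G s hI hx hv), rfl⟩

end SandpileAux

/-- The lattice `𝓗_E` of nonempty saturated hereditary subsets is order
isomorphic to the lattice `𝓛(SP(E))` of order-ideals of `SP(E)`, via `H ↦ SP(E_H)` with
inverse `I ↦ {v : class of v ∈ I}`. -/
theorem hereditary_orderIdeal_orderIso (G : DGraph) (s : G.V) (hG : G.IsSandpile s) :
    ∃ φ : {H : Finset G.V // H.Nonempty ∧ G.Hereditary H ∧ G.Saturated H} ≃o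
          {I : Set (G.SP s) // IsOrderIdeal I},
      (∀ H, (φ H).1 = G.spImage s H.1) ∧
      (∀ I, ∀ v : G.V, v ∈ (φ.symm I).1 ↔ G.spMk s {v} ∈ I.1) := by
  open SandpileAux in
  refine ⟨{
    toFun := fun H => ⟨G.spImage s H.1, spImage_isOrderIdeal G s hG H.2.1 H.2.2.1 H.2.2.2⟩
    invFun := fun I => ⟨vertSet G s I.1, vertSet_props G s I.2⟩
    left_inv := ?_
    right_inv := ?_
    map_rel_iff' := ?_ }, fun H => rfl, fun I v => (mem_vertSet G s)⟩
  · rintro ⟨H, hne, hher, hsat⟩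
    ext v
    simp only [mem_vertSet]
    exact spMk_singleton_mem_spImage G s hG hne hher hsat
  · rintro ⟨I, hI⟩
    ext x
    rw [Subtype.coe_mk]
    exact Set.ext_iff.1 (spImage_vertSet G s hI) x
  · rintro ⟨H, hne, hher, hsat⟩ ⟨H', hne', hher', hsat'⟩
    constructor
    · intro h
      intro v hv
      have : G.spMk s {v} ∈ G.spImage s H :=
        (SandpileAux.spMk_singleton_mem_spImage G s hG hne hher hsat).2 hv
      exact (SandpileAux.spMk_singleton_mem_spImage G s hG hne' hher' hsat').1 (h this)
    · intro h x hx
      obtain ⟨m, hm, rfl⟩ := (mem_spImage G s).1 hx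
      exact (mem_spImage G s).2 ⟨m, fun v hv => h (hm v hv), rfl⟩
end
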